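/- arXiv:2412.04427 — 6 statements merged into one kernel-verified Lean document; each statement's English description precedes it below -/
import Mathlib

section
/- Let μ < L with L > 0 and let f ∈ F_{μ,L}. Then for all p, q ∈ ℝ^d the interpolation inequality holds: 0 ≥ f(p) − f(q) + ⟪∇f(p), q − p⟫ + (1/(2L))‖∇f(p) − ∇f(q)‖² + (μL/(2(L−μ)))‖p − q − (1/L)(∇f(p) − ∇f(q))‖². -/
open scoped RealInnerProductSpace

lemma interp_aux {E : Type*} [NormedAddCommGroup E] [InnerProductSpace ℝ E]
    (μ L : ℝ) (hL : 0 < L) (hM : 0 < L - μ) (u w : E) :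
    1 / (2 * L) * ‖w‖ ^ 2 + μ * L / (2 * (L - μ)) * ‖u - (1 / L) • w‖ ^ 2
      = -⟪w, (1 / (L - μ)) • (μ • u - w)⟫
        + μ / 2 * ‖u + (1 / (L - μ)) • (μ • u - w)‖ ^ 2
        - L / 2 * ‖(1 / (L - μ)) • (μ • u - w)‖ ^ 2 := by
  have hL' : L ≠ 0 := ne_of_gt hL
  have hM' : L - μ ≠ 0 := ne_of_gt hM
  rw [← real_inner_self_eq_norm_sq, ← real_inner_self_eq_norm_sq,
    ← real_inner_self_eq_norm_sq, ← real_inner_self_eq_norm_sq]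
  simp only [inner_add_left, inner_add_right, inner_sub_left, inner_sub_right,
    real_inner_smul_left, real_inner_smul_right, real_inner_comm w u]
  field_simp
  ring

/-- **Interpolation inequality** for `μ`-strongly convex, `L`-smooth functions
(`μ < L`, `L > 0`) possessing a global minimizer:
`0 ≥ f(p) − f(q) + ⟪∇f(p), q − p⟫ + (1/(2L))‖∇f(p) − ∇f(q)‖²
   + (μL/(2(L−μ)))‖p − q − (1/L)(∇f(p) − ∇f(q))‖²` for all `p, q`. -/
theorem interpolation_inequality
    (d : ℕ) (hd : 1 ≤ d) (μ L : ℝ) (hL : 0 < L) (hμL : μ < L)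
    (f : EuclideanSpace ℝ (Fin d) → ℝ) (hdiff : Differentiable ℝ f)
    (hsc : ∀ p q : EuclideanSpace ℝ (Fin d),
      f p - f q + ⟪gradient f p, q - p⟫ + μ / 2 * ‖p - q‖ ^ 2 ≤ 0)
    (hsm : ∀ p q : EuclideanSpace ℝ (Fin d),
      0 ≤ f p - f q + ⟪gradient f p, q - p⟫ + L / 2 * ‖p - q‖ ^ 2)
    (hmin : ∃ xstar : EuclideanSpace ℝ (Fin d), ∀ y, f xstar ≤ f y) :
    ∀ p q : EuclideanSpace ℝ (Fin d),
      f p - f q + ⟪gradient f p, q - p⟫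
        + 1 / (2 * L) * ‖gradient f p - gradient f q‖ ^ 2
        + μ * L / (2 * (L - μ)) * ‖p - q - (1 / L) • (gradient f p - gradient f q)‖ ^ 2 ≤ 0 := by
  intro p q
  have hM : 0 < L - μ := by linarith
  set w : EuclideanSpace ℝ (Fin d) := gradient f p - gradient f q with hw
  set u : EuclideanSpace ℝ (Fin d) := p - q with hu
  set s : EuclideanSpace ℝ (Fin d) := (1 / (L - μ)) • (μ • u - w) with hs
  set z : EuclideanSpace ℝ (Fin d) := q - s with hz
  have hpz : p - z = u + s := by rw [hz, hu]; abel
  have hzp : z - p = -(u + s) := by rw [hz, hu]; abel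
  have hqz : q - z = s := by rw [hz]; abel
  have hzq : z - q = -s := by rw [hz]; abel
  have hqp : q - p = -u := by rw [hu]; abel
  have hA := hsc p z
  have hB := hsm q z
  rw [hpz, hzp] at hA
  rw [hqz, hzq] at hB
  rw [hqp]
  have hid := interp_aux μ L hL hM u w
  rw [← hs] at hid
  have hws : ⟪w, s⟫ = ⟪gradient f p, s⟫ - ⟪gradient f q, s⟫ := by
    rw [hw, inner_sub_left]
  have e1 : ⟪gradient f p, -(u + s)⟫ = -⟪gradient f p, u⟫ - ⟪gradient f p, s⟫ := by
    rw [inner_neg_right, inner_add_right]; ring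
  have e2 : ⟪gradient f q, -s⟫ = -⟪gradient f q, s⟫ := by rw [inner_neg_right]
  have e3 : ⟪gradient f p, -u⟫ = -⟪gradient f p, u⟫ := by rw [inner_neg_right]
  rw [e1] at hA
  rw [e2] at hB
  rw [e3]
  linarith
end

section
/- For every real μ and all reals L, L' with μ < L < L' and L > 0, one has Q(μ, L) ≥ Q(μ, L'). -/
open scoped RealInnerProductSpace

lemma Q_key (A X I μ L L' : ℝ) (hN : 0 ≤ A - 2*μ*I + μ^2*X)
    (hL : 0 < L) (hμL : μ < L) (hLL' : L < L') :
    1/(2*L')*A + μ*L'/(2*(L'-μ))*(X - (2/L')*I + (1/L'^2)*A)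
      ≤ 1/(2*L)*A + μ*L/(2*(L-μ))*(X - (2/L)*I + (1/L^2)*A) := by
  have hL' : 0 < L' := hL.trans hLL'
  have h1 : 0 < L - μ := by linarith
  have h2 : 0 < L' - μ := by linarith
  rw [← sub_nonneg]
  have hid : (1/(2*L)*A + μ*L/(2*(L-μ))*(X - (2/L)*I + (1/L^2)*A))
      - (1/(2*L')*A + μ*L'/(2*(L'-μ))*(X - (2/L')*I + (1/L'^2)*A))
      = (L' - L) * (A - 2*μ*I + μ^2*X) / (2*(L-μ)*(L'-μ)) := by
    field_simp
    ring
  rw [hid]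
  have : 0 ≤ (L' - L) * (A - 2*μ*I + μ^2*X) := mul_nonneg (by linarith) hN
  positivity

/-- The right-hand side `Q(μ, L)` of the interpolation inequality is antitone in `L`:
for fixed data `p, q, g_p, g_q, f_p, f_q`, if `μ < L < L'` and `L > 0` then
`Q(μ, L) ≥ Q(μ, L')`. -/
theorem Q_antitone_in_L
    (d : ℕ) (hd : 1 ≤ d)
    (p q gp gq : EuclideanSpace ℝ (Fin d)) (fp fq : ℝ)
    (μ L L' : ℝ) (hL : 0 < L) (hμL : μ < L) (hLL' : L < L') :
    fp - fq + ⟪gp, q - p⟫ + 1 / (2 * L') * ‖gp - gq‖ ^ 2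
        + μ * L' / (2 * (L' - μ)) * ‖p - q - (1 / L') • (gp - gq)‖ ^ 2
      ≤ fp - fq + ⟪gp, q - p⟫ + 1 / (2 * L) * ‖gp - gq‖ ^ 2
        + μ * L / (2 * (L - μ)) * ‖p - q - (1 / L) • (gp - gq)‖ ^ 2 := by
  have hL' : 0 < L' := hL.trans hLL'
  set A := ‖gp - gq‖ ^ 2 with hA
  set X := ‖p - q‖ ^ 2 with hX
  set I := ⟪p - q, gp - gq⟫ with hI
  have hexp : ∀ t : ℝ, 0 < t →
      ‖p - q - (1/t) • (gp - gq)‖ ^ 2 = X - (2/t)*I + (1/t^2)*A := by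
    intro t ht
    rw [@norm_sub_sq_real, real_inner_smul_right, norm_smul]
    simp [hA, hX, hI, abs_of_pos ht, mul_pow]
    ring
  have hN : 0 ≤ A - 2*μ*I + μ^2*X := by
    have := sq_nonneg (‖(gp - gq) - μ • (p - q)‖)
    rw [@norm_sub_sq_real, real_inner_smul_right, norm_smul, real_inner_comm] at this
    simp only [Real.norm_eq_abs, mul_pow, sq_abs] at this
    rw [← hA, ← hX, ← hI] at this
    nlinarith [this]
  have h := Q_key A X I μ L L' hN hL hμL hLL'
  rw [hexp L hL, hexp L' hL']
  have e1 : (1:ℝ) / (2 * L) = 1/2/L := by ring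
  have e2 : (1:ℝ) / (2 * L') = 1/2/L' := by ring
  nlinarith [h]
end

section
/- If ν : I_N^* × I_N^* → ℝ is nonnegative with zero diagonal, satisfies (G1) (for every k ∈ I_N^*, ∑_{i∈I_N^*} ν_{i,k} − ∑_{j∈I_N^*} ν_{k,j} = 1 if k = *, = −1 if k = 0, and = 0 otherwise), and satisfies the sparsity condition (relaxed-g) (ν_{i,j} = 0 for every (i,j) not of the form (k,k+1) with 0 ≤ k ≤ N−1, (N,k) with 0 ≤ k ≤ N−1, or (N,*)), then there exists a nonnegative λ : I_N^* × I_N^* → ℝ with zero diagonal satisfying (F1) (for every k ∈ I_N^*, ∑_{i∈I_N^*} λ_{i,k} − ∑_{j∈I_N^*} λ_{k,j} = 1 if k = N, = −1 if k = *, and = 0 otherwise) and the sparsity condition (relaxed-f) (λ_{i,j} = 0 for every (i,j) not of the form (k,k+1) with 0 ≤ k ≤ N−1 or (*,k) with 0 ≤ k ≤ N), such that for all points x_0, x_0^+,…,x_N^+, x_*^+, y_0, y_0^+,…,y_N^+, y_*^+ ∈ ℝ^d, condition (X_λ) holds if and only if condition (Y_ν) holds. -/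
open Finset
open scoped RealInnerProductSpace

noncomputable section

/-- `ℝ^d` with the Euclidean structure. -/
abbrev Vec (d : ℕ) := EuclideanSpace ℝ (Fin d)

/-- The index set `I_N^* = {0, …, N} ∪ {*}`; `some k` is the numeric index `k`,
`none` is the index `*`. -/
abbrev Idx (N : ℕ) := Option (Fin (N + 1))

/-- The interpolation-inequality quantity
`Φ_{i,j} = f_j − f_i + ⟪g_j, p_i − p_j⟫ + (1/(2L))‖g_i − g_j‖²
  + (μL/(2(L−μ)))‖p_i − p_j − (1/L)(g_i − g_j)‖²`. -/
def Phi {d : ℕ} {ι : Type*} (L μ : ℝ) (p g : ι → Vec d) (f : ι → ℝ) (i j : ι) : ℝ :=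
  f j - f i + ⟪g j, p i - p j⟫ + 1 / (2 * L) * ‖g i - g j‖ ^ 2
    + μ * L / (2 * (L - μ)) * ‖p i - p j - (1 / L) • (g i - g j)‖ ^ 2

/-- `x_0, …, x_N` are generated by the algorithm given by the `N × N` matrix `M` from
`g_0, …, g_{N−1}`: `x_{k+1} − x_k = −(1/L) ∑_{j=0}^{k} M_{k+1,j+1} g_j` (1-indexed matrix
entries). -/
def GenBy {d N : ℕ} (L : ℝ) (M : Matrix (Fin N) (Fin N) ℝ)
    (x g : Fin (N + 1) → Vec d) : Prop :=
  ∀ k : Fin N, x k.succ - x k.castSucc =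
    -(1 / L) • ∑ j : Fin N, (if (j : ℕ) ≤ (k : ℕ) then M k j • g j.castSucc else 0)

/-- Anti-diagonal transpose of a square matrix: `(Mᴬ)_{i,j} = M_{n+1−j, n+1−i}`. -/
def antiT {n : ℕ} (M : Matrix (Fin n) (Fin n) ℝ) : Matrix (Fin n) (Fin n) ℝ :=
  fun i j => M j.rev i.rev

/-- The `(N+1) × (N+1)` matrix `H̃` associated with the `N × N` lower-triangular matrix
`H`: `H̃_{1,1} = 1` and, for `2 ≤ i ≤ N+1`, `H̃_{i,j} = H_{i−1,j}` for `j ≤ i−2`,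
`H̃_{i,i−1} = H_{i−1,i−1} − 1`, `H̃_{i,i} = 1` (1-indexed). -/
def Htilde {N : ℕ} (H : Matrix (Fin N) (Fin N) ℝ) :
    Matrix (Fin (N + 1)) (Fin (N + 1)) ℝ :=
  fun i j =>
    if (i : ℕ) = (j : ℕ) then 1
    else if h2 : (j : ℕ) + 1 = (i : ℕ) then
      H ⟨(j : ℕ), by have := i.isLt; omega⟩ ⟨(j : ℕ), by have := i.isLt; omega⟩ - 1
    else if h3 : (j : ℕ) + 1 < (i : ℕ) then
      H ⟨(i : ℕ) - 1, by have := i.isLt; omega⟩ ⟨(j : ℕ), by have := i.isLt; omega⟩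
    else 0

/-- The tuple of consecutive differences `(p_0^+ − base, p_1^+ − p_0^+, …, p_N^+ − p_{N−1}^+)`
built from a base point and the numeric entries of `p : I_N^* → ℝ^d`. -/
def dvec {d N : ℕ} (base : Vec d) (p : Idx N → Vec d) : Fin (N + 1) → Vec d :=
  fun i =>
    if (i : ℕ) = 0 then p (some 0) - base
    else p (some i) - p (some ⟨(i : ℕ) - 1, by have := i.isLt; omega⟩)

/-- The quantity `S` of the dual PEP analysis:
`S = −L⟪H̃⁻¹x, Ty⟫ + (L/2)‖y_0 − (y_0^+ + y_*^+)/2 − (x_N^+ − x_*^+)/2‖²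
 − (μL/(L−μ))[∑_{k=1}^{N} ⟪y_k^+ − y_{k−1}^+, x_{N−k}^+⟫ + ⟪(y_0^+ + y_*^+)/2 − y_N^+, x_*^+⟫
 + ⟪(y_0^+ − y_*^+)/2, x_N^+⟫]`. -/
def Squant {d N : ℕ} (L μ : ℝ) (H : Matrix (Fin N) (Fin N) ℝ)
    (x0 y0 : Vec d) (xp yp : Idx N → Vec d) : ℝ :=
  -L * (∑ i : Fin (N + 1),
      ⟪∑ j : Fin (N + 1), (Htilde H)⁻¹ i j • dvec x0 xp j, dvec y0 yp i.rev⟫)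
  + L / 2 * ‖y0 - (1 / 2 : ℝ) • (yp (some 0) + yp none)
      - (1 / 2 : ℝ) • (xp (some (Fin.last N)) - xp none)‖ ^ 2
  - μ * L / (L - μ) *
      ((∑ k : Fin N, ⟪yp (some k.succ) - yp (some k.castSucc), xp (some k.rev.castSucc)⟫)
        + ⟪(1 / 2 : ℝ) • (yp (some 0) + yp none) - yp (some (Fin.last N)), xp none⟫
        + ⟪(1 / 2 : ℝ) • (yp (some 0) - yp none), xp (some (Fin.last N))⟫)

/-- Condition `(X_λ)`:
`y_k^+ − y_{k−1}^+ = ∑_{i∈I_N^*} λ_{i,N−k}(x_i^+ − x_{N−k}^+)` for `k = 1, …, N`, and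
`(y_0^+ + y_*^+)/2 − y_N^+ = (x_N^+ − x_*^+)/2 + ∑_{i∈I_N^*} λ_{i,*}(x_i^+ − x_*^+)`. -/
def CondX {d N : ℕ} (lam : Idx N → Idx N → ℝ) (xp yp : Idx N → Vec d) : Prop :=
  (∀ k : Fin N, yp (some k.succ) - yp (some k.castSucc) =
      ∑ i : Idx N, lam i (some k.rev.castSucc) • (xp i - xp (some k.rev.castSucc))) ∧
  (1 / 2 : ℝ) • (yp (some 0) + yp none) - yp (some (Fin.last N)) =
      (1 / 2 : ℝ) • (xp (some (Fin.last N)) - xp none)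
        + ∑ i : Idx N, lam i none • (xp i - xp none)

/-- Condition `(Y_ν)`:
`x_k^+ − x_{k−1}^+ = ∑_{i∈I_N^*} ν_{i,N−k}(y_i^+ − y_{N−k}^+)` for `k = 1, …, N−1`,
`x_0^+ − x_*^+ = ∑_{i∈I_N^*} ν_{i,N}(y_i^+ − y_N^+)`, and
`(x_*^+ − x_N^+)/2 = (y_*^+ − y_0^+)/2 + ∑_{i∈I_N^*} ν_{i,*}(y_i^+ − y_*^+)`. -/
def CondY {d N : ℕ} (nu : Idx N → Idx N → ℝ) (xp yp : Idx N → Vec d) : Prop :=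
  (∀ k : Fin N, (k : ℕ) + 1 < N →
      xp (some k.succ) - xp (some k.castSucc) =
        ∑ i : Idx N, nu i (some k.rev.castSucc) • (yp i - yp (some k.rev.castSucc))) ∧
  (xp (some 0) - xp none =
      ∑ i : Idx N, nu i (some (Fin.last N)) • (yp i - yp (some (Fin.last N)))) ∧
  (1 / 2 : ℝ) • (xp none - xp (some (Fin.last N))) =
      (1 / 2 : ℝ) • (yp none - yp (some 0)) + ∑ i : Idx N, nu i none • (yp i - yp none)

/-- `(F1)`: `∑_i λ_{i,k} − ∑_j λ_{k,j}` equals `1` for `k = N`, `−1` for `k = *`, and `0`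
otherwise. -/
def CondF1 {N : ℕ} (lam : Idx N → Idx N → ℝ) : Prop :=
  ∀ k : Idx N, (∑ i : Idx N, lam i k) - ∑ j : Idx N, lam k j =
    if k = some (Fin.last N) then 1 else if k = none then -1 else 0

/-- `(G1)`: `∑_i ν_{i,k} − ∑_j ν_{k,j}` equals `1` for `k = *`, `−1` for `k = 0`, and `0`
otherwise. -/
def CondG1 {N : ℕ} (nu : Idx N → Idx N → ℝ) : Prop :=
  ∀ k : Idx N, (∑ i : Idx N, nu i k) - ∑ j : Idx N, nu k j =
    if k = none then 1 else if k = some 0 then -1 else 0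

/-- The sparsity pattern `(relaxed-f)`: the allowed pairs `(k, k+1)` for `0 ≤ k ≤ N−1` and
`(*, k)` for `0 ≤ k ≤ N`. -/
def RelF (N : ℕ) (i j : Idx N) : Prop :=
  (∃ k : Fin N, i = some k.castSucc ∧ j = some k.succ) ∨
  (∃ k : Fin (N + 1), i = none ∧ j = some k)

/-- The sparsity pattern `(relaxed-g)`: the allowed pairs `(k, k+1)` and `(N, k)` for
`0 ≤ k ≤ N−1` and `(N, *)`. -/
def RelG (N : ℕ) (i j : Idx N) : Prop :=
  (∃ k : Fin N, i = some k.castSucc ∧ j = some k.succ) ∨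
  (∃ k : Fin N, i = some (Fin.last N) ∧ j = some k.castSucc) ∨
  (i = some (Fin.last N) ∧ j = none)

/-- The sparsity pattern `(d1-tau)`: the allowed pairs `(k, k+1)`, `(k+1, k)`, `(N, k)` for
`0 ≤ k ≤ N−1` and `(N, *)`. -/
def RelD (N : ℕ) (i j : Idx N) : Prop :=
  (∃ k : Fin N, i = some k.castSucc ∧ j = some k.succ) ∨
  (∃ k : Fin N, i = some k.succ ∧ j = some k.castSucc) ∨
  (∃ k : Fin N, i = some (Fin.last N) ∧ j = some k.castSucc) ∨
  (i = some (Fin.last N) ∧ j = none)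

end

/-!
Under `(relaxed-g)` the flow `ν` lives on the path `0 → 1 → ⋯ → N`, the edges `(N, k)` and the
edge `(N, *)`. Conservation `(G1)` forces `ν_{N,*} = 1` and `A_{k+1} = A_k + ν_{N,k}` for the path
weights `A_k = ν_{k-1,k}` (with `A_0 = 1`), so `A_k ≥ 1` for `k ≤ N`. With
`λ_{k,k+1} = 1 / A_{N-k}` and `λ_{*,k} = 1 / A_{N-k} - 1 / A_{N-k+1}` (and `1 / A_{N+1} = 0`),
both `(X_λ)` and `(Y_ν)` are telescoped forms of the same explicit relations
`x_t^+ - x_*^+ = A_{N-t} (y_{N-1-t}^+ - y_N^+)` for `t < N` and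
`x_N^+ - x_*^+ = y_0^+ + y_*^+ - 2 y_N^+`.
-/

namespace RelaxedCorrespondence

theorem forall_le_eq_iff_eq_and_sub_eq {M : Type*} [AddCommGroup M] {f g : ℕ → M} {n j : ℕ}
    (hj : j ≤ n) :
    (∀ k ≤ n, f k = g k) ↔ f j = g j ∧ ∀ k < n, f (k + 1) - f k = g (k + 1) - g k := by
  refine ⟨fun h => ⟨h j hj, fun k hk => by rw [h k hk.le, h (k + 1) hk]⟩, ?_⟩
  rintro ⟨hj_eq, hdiff⟩
  have hconst : ∀ k ≤ n, f k - g k = f 0 - g 0 := by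
    intro k hk
    induction k with
    | zero => rfl
    | succ k ih => rw [← ih (by omega), sub_eq_sub_iff_sub_eq_sub]; exact hdiff k (by omega)
  intro k hk
  rw [← sub_eq_zero, hconst k hk, ← hconst j hj, hj_eq, sub_self]

theorem forall_lt_sub_one_sub_iff {P : ℕ → Prop} {n : ℕ} :
    (∀ s < n, P (n - 1 - s)) ↔ ∀ t < n, P t :=
  ⟨fun h t ht => by simpa [Nat.sub_sub_self (by omega : t ≤ n - 1)] using h (n - 1 - t) (by omega),
    fun h s _ => h _ (by omega)⟩

variable {N : ℕ}

/-- The numeric index `n` of `I_N^*`, read modulo `N + 1`. -/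
def idx (n : ℕ) : Idx N := some (Fin.ofNat (N + 1) n)

theorem some_eq_idx (i : Fin (N + 1)) : some i = (idx i : Idx N) := by
  simp [idx]

theorem idx_ne_none (n : ℕ) : (idx n : Idx N) ≠ none := Option.some_ne_none _

theorem idx_eq_some_iff {n : ℕ} (hn : n ≤ N) (i : Fin (N + 1)) :
    (idx n : Idx N) = some i ↔ n = i := by
  simp [idx, Fin.ext_iff, Nat.mod_eq_of_lt (Nat.lt_succ_of_le hn)]

theorem idx_inj {m n : ℕ} (hm : m ≤ N) (hn : n ≤ N) : (idx m : Idx N) = idx n ↔ m = n := by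
  rw [show (idx n : Idx N) = some (Fin.ofNat (N + 1) n) from rfl, idx_eq_some_iff hm,
    Fin.val_ofNat, Nat.mod_eq_of_lt (Nat.lt_succ_of_le hn)]

section Sparsity

variable {R M : Type*} [Semiring R] [AddCommMonoid M] [Module R M] {μ : Idx N → Idx N → R}

section RelG

variable (hμ : ∀ i j, ¬ RelG N i j → μ i j = 0)
include hμ

theorem apply_none_left_of_relG (j : Idx N) : μ none j = 0 :=
  hμ _ _ (by rintro (⟨k, h, -⟩ | ⟨k, h, -⟩ | ⟨h, -⟩) <;> cases h)

theorem apply_self_of_relG (i : Idx N) : μ i i = 0 := by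
  refine hμ _ _ ?_
  rintro (⟨k, rfl, h⟩ | ⟨k, rfl, h⟩ | ⟨rfl, h⟩)
  · simp [Fin.ext_iff] at h
  · simp [Fin.ext_iff] at h; omega
  · cases h

/-- For `m = 0` the first summand is the diagonal entry `μ_{0,0}`, which vanishes. -/
theorem sum_smul_idx_of_relG (hN : 1 ≤ N) {m : ℕ} (hm : m ≤ N) (v : Idx N → M) :
    ∑ i, μ i (idx m) • v i =
      μ (idx (m - 1)) (idx m) • v (idx (m - 1)) + μ (idx N) (idx m) • v (idx N) := by
  refine Fintype.sum_eq_add _ _ (by rw [Ne, idx_inj (by omega) le_rfl]; omega) fun i hi => ?_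
  rw [hμ _ _ ?_, zero_smul]
  rintro (⟨k, rfl, hk⟩ | ⟨k, rfl, -⟩ | ⟨-, hk⟩)
  · rw [idx_eq_some_iff hm, Fin.val_succ] at hk
    exact hi.1 (by rw [some_eq_idx, Fin.val_castSucc, hk, Nat.add_sub_cancel])
  · exact hi.2 (by rw [some_eq_idx, Fin.val_last])
  · exact idx_ne_none m hk

theorem sum_smul_none_of_relG (v : Idx N → M) :
    ∑ i, μ i none • v i = μ (idx N) none • v (idx N) := by
  refine Fintype.sum_eq_single _ fun i hi => ?_
  rw [hμ _ _ ?_, zero_smul]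
  rintro (⟨k, -, h⟩ | ⟨k, -, h⟩ | ⟨rfl, -⟩)
  · cases h
  · cases h
  · exact hi (by rw [some_eq_idx, Fin.val_last])

theorem sum_idx_of_relG {m : ℕ} (hm : m < N) : ∑ j, μ (idx m) j = μ (idx m) (idx (m + 1)) := by
  refine Fintype.sum_eq_single _ fun j hj => hμ _ _ ?_
  rintro (⟨k, hk, rfl⟩ | ⟨k, hk, -⟩ | ⟨hk, -⟩)
  · rw [idx_eq_some_iff hm.le, Fin.val_castSucc] at hk
    exact hj (by rw [some_eq_idx, Fin.val_succ, hk])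
  all_goals rw [idx_eq_some_iff hm.le, Fin.val_last] at hk; omega

end RelG

section RelF

variable (hμ : ∀ i j, ¬ RelF N i j → μ i j = 0)
include hμ

theorem apply_last_left_of_relF (j : Idx N) : μ (idx N) j = 0 := by
  refine hμ _ _ ?_
  rintro (⟨k, hk, -⟩ | ⟨k, hk, -⟩)
  · rw [idx_eq_some_iff le_rfl, Fin.val_castSucc] at hk; omega
  · exact idx_ne_none N hk

theorem sum_smul_idx_of_relF {m : ℕ} (hm : m ≤ N) (v : Idx N → M) :
    ∑ i, μ i (idx m) • v i =
      μ (idx (m - 1)) (idx m) • v (idx (m - 1)) + μ none (idx m) • v none := by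
  refine Fintype.sum_eq_add _ _ (idx_ne_none _) fun i hi => ?_
  rw [hμ _ _ ?_, zero_smul]
  rintro (⟨k, rfl, hk⟩ | ⟨k, rfl, -⟩)
  · rw [idx_eq_some_iff hm, Fin.val_succ] at hk
    exact hi.1 (by rw [some_eq_idx, Fin.val_castSucc, hk, Nat.add_sub_cancel])
  · exact hi.2 rfl

theorem sum_idx_of_relF {m : ℕ} (hm : m < N) : ∑ j, μ (idx m) j = μ (idx m) (idx (m + 1)) := by
  refine Fintype.sum_eq_single _ fun j hj => hμ _ _ ?_
  rintro (⟨k, hk, rfl⟩ | ⟨k, hk, -⟩)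
  · rw [idx_eq_some_iff hm.le, Fin.val_castSucc] at hk
    exact hj (by rw [some_eq_idx, Fin.val_succ, hk])
  · exact idx_ne_none m hk

end RelF

end Sparsity

section Multipliers

variable (nu : Idx N → Idx N → ℝ)

/-- `ν_{r-1,r}` along the path `0 → 1 → ⋯ → N`, extended by `1` at `r = 0` and by `0` past `N`,
so that its inverse vanishes there. -/
def chainWeight (r : ℕ) : ℝ :=
  if r = 0 then 1 else if r ≤ N then nu (idx (r - 1)) (idx r) else 0

theorem chainWeight_zero : chainWeight nu 0 = 1 := if_pos rfl

theorem chainWeight_succ_of_lt {m : ℕ} (hm : m < N) :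
    chainWeight nu (m + 1) = nu (idx m) (idx (m + 1)) := by
  simp [chainWeight, Nat.succ_le_of_lt hm]

theorem chainWeight_of_lt {r : ℕ} (hr : N < r) : chainWeight nu r = 0 := by
  simp [chainWeight, hr.not_ge, (Nat.zero_le N).trans_lt hr |>.ne']

noncomputable def lamOf : Idx N → Idx N → ℝ
  | _, none => 0
  | some i, some j => if (j : ℕ) = i + 1 then (chainWeight nu (N - i))⁻¹ else 0
  | none, some j => (chainWeight nu (N - j))⁻¹ - (chainWeight nu (N + 1 - j))⁻¹

theorem lamOf_self (i : Idx N) : lamOf nu i i = 0 := by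
  rcases i with _ | i
  · rfl
  · simp [lamOf]

theorem lamOf_none_right (i : Idx N) : lamOf nu i none = 0 := by
  cases i <;> rfl

theorem lamOf_eq_zero_of_not_relF (i j : Idx N) (h : ¬ RelF N i j) : lamOf nu i j = 0 := by
  rcases i with _ | i <;> rcases j with _ | j
  · rfl
  · exact absurd (Or.inr ⟨j, rfl, rfl⟩) h
  · rfl
  · refine if_neg fun hij => h (Or.inl ⟨⟨i, by omega⟩, rfl, ?_⟩)
    simp [Fin.ext_iff, hij]

theorem lamOf_idx_idx {i j : ℕ} (hi : i ≤ N) (hj : j ≤ N) :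
    lamOf nu (idx i) (idx j) = if j = i + 1 then (chainWeight nu (N - i))⁻¹ else 0 := by
  simp [lamOf, idx, Nat.mod_eq_of_lt (Nat.lt_succ_of_le hi),
    Nat.mod_eq_of_lt (Nat.lt_succ_of_le hj)]

theorem lamOf_none_idx {j : ℕ} (hj : j ≤ N) :
    lamOf nu none (idx j) = (chainWeight nu (N - j))⁻¹ - (chainWeight nu (N + 1 - j))⁻¹ := by
  simp [lamOf, idx, Nat.mod_eq_of_lt (Nat.lt_succ_of_le hj)]

theorem sum_smul_lamOf {M : Type*} [AddCommGroup M] [Module ℝ M] {m : ℕ} (hm : m ≤ N)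
    (v : Idx N → M) :
    ∑ i, lamOf nu i (idx m) • v i =
      (chainWeight nu (N + 1 - m))⁻¹ • v (idx (m - 1)) +
        ((chainWeight nu (N - m))⁻¹ - (chainWeight nu (N + 1 - m))⁻¹) • v none := by
  rw [sum_smul_idx_of_relF (lamOf_eq_zero_of_not_relF nu) hm, lamOf_idx_idx nu (by omega) hm,
    lamOf_none_idx nu hm]
  rcases m with _ | m
  · simp [chainWeight_of_lt nu (Nat.lt_succ_self N)]
  · simp [Nat.add_sub_add_right]

theorem chainWeight_nonneg (hnn : ∀ i j, 0 ≤ nu i j) (r : ℕ) : 0 ≤ chainWeight nu r := by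
  unfold chainWeight
  split_ifs
  exacts [zero_le_one, hnn _ _, le_rfl]

theorem sum_lamOf_none : ∑ j, lamOf nu none j = 1 := by
  have h := Finset.sum_range_sub (fun j => (chainWeight nu (N + 1 - j))⁻¹) (N + 1)
  simp only [Nat.add_sub_add_right, Nat.sub_self, Nat.sub_zero, chainWeight_zero,
    chainWeight_of_lt nu (Nat.lt_succ_self N), inv_zero, inv_one, sub_zero] at h
  rw [Fintype.sum_option, ← h, ← Fin.sum_univ_eq_sum_range (fun j => _ - _)]
  simp [lamOf]

theorem condF1_lamOf : CondF1 (lamOf nu) := by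
  intro k
  rcases k with _ | m
  · rw [Fintype.sum_eq_zero _ (lamOf_none_right nu), sum_lamOf_none]
    simp
  · have hm : (m : ℕ) ≤ N := Nat.le_of_lt_succ m.isLt
    have hcol := sum_smul_lamOf nu hm (fun _ => (1 : ℝ))
    simp only [smul_eq_mul, mul_one, add_sub_cancel] at hcol
    rw [some_eq_idx m, hcol, if_neg (idx_ne_none _)]
    simp only [idx_eq_some_iff hm, Fin.val_last]
    rcases hm.lt_or_eq with hm | hm
    · rw [sum_idx_of_relF (lamOf_eq_zero_of_not_relF nu) hm, lamOf_idx_idx nu hm.le hm,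
        if_pos rfl, if_neg hm.ne, sub_self]
    · rw [if_pos hm, hm, Nat.sub_self, chainWeight_zero, inv_one,
        Fintype.sum_eq_zero _ (apply_last_left_of_relF (lamOf_eq_zero_of_not_relF nu)), sub_zero]

variable {nu} (hsp : ∀ i j, ¬ RelG N i j → nu i j = 0) (hG1 : CondG1 nu)
include hsp hG1

theorem apply_last_none_eq_one : nu (idx N) none = 1 := by
  have h := hG1 none
  have hcol := sum_smul_none_of_relG hsp (fun _ => (1 : ℝ))
  simp only [smul_eq_mul, mul_one] at hcol
  simpa [hcol, apply_none_left_of_relG hsp] using h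

variable (hN : 1 ≤ N)
include hN

theorem chainWeight_succ {m : ℕ} (hm : m < N) :
    chainWeight nu (m + 1) = chainWeight nu m + nu (idx N) (idx m) := by
  have h := hG1 (idx m)
  have hcol := sum_smul_idx_of_relG hsp hN hm.le (fun _ => (1 : ℝ))
  simp only [smul_eq_mul, mul_one] at hcol
  rw [if_neg (idx_ne_none m), sum_idx_of_relG hsp hm, hcol,
    ← chainWeight_succ_of_lt nu hm] at h
  rcases m with _ | m
  · rw [if_pos ((idx_eq_some_iff (Nat.zero_le N) 0).mpr rfl), apply_self_of_relG hsp] at h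
    rw [chainWeight_zero]
    linarith
  · rw [if_neg (by rw [idx_eq_some_iff hm.le]; simp), Nat.add_sub_cancel,
      ← chainWeight_succ_of_lt nu (by omega)] at h
    linarith

variable (hnn : ∀ i j, 0 ≤ nu i j)
include hnn

theorem one_le_chainWeight {r : ℕ} (hr : r ≤ N) : 1 ≤ chainWeight nu r := by
  induction r with
  | zero => rw [chainWeight_zero]
  | succ r ih =>
    rw [chainWeight_succ hsp hG1 hN (by omega)]
    linarith [ih (by omega), hnn (idx N) (idx r)]

theorem antitone_inv_chainWeight : Antitone fun r => (chainWeight nu r)⁻¹ := by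
  refine antitone_nat_of_succ_le fun r => ?_
  rcases lt_or_ge r N with hr | hr
  · have h1 := one_le_chainWeight hsp hG1 hN hnn hr.le
    rw [chainWeight_succ hsp hG1 hN hr]
    exact inv_anti₀ (by linarith) (le_add_of_nonneg_right (hnn _ _))
  · rw [chainWeight_of_lt nu (Nat.lt_succ_of_le hr), inv_zero]
    exact inv_nonneg.mpr (chainWeight_nonneg nu hnn r)

theorem lamOf_nonneg (i j : Idx N) : 0 ≤ lamOf nu i j := by
  rcases i with _ | i <;> rcases j with _ | j
  · exact le_rfl
  · exact sub_nonneg.mpr (antitone_inv_chainWeight hsp hG1 hN hnn (by omega))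
  · exact le_rfl
  · simp only [lamOf]
    split_ifs
    exacts [inv_nonneg.mpr (chainWeight_nonneg nu hnn _), le_rfl]

end Multipliers

section Conditions

variable {d : ℕ}

def CondExplicit (nu : Idx N → Idx N → ℝ) (xp yp : Idx N → Vec d) : Prop :=
  (∀ t < N, xp (idx t) - xp none = chainWeight nu (N - t) • (yp (idx (N - 1 - t)) - yp (idx N))) ∧
  xp (idx N) - xp none = yp (idx 0) + yp none - (2 : ℝ) • yp (idx N)

variable {nu : Idx N → Idx N → ℝ} (hsp : ∀ i j, ¬ RelG N i j → nu i j = 0) (hG1 : CondG1 nu)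
  (hN : 1 ≤ N) (xp yp : Idx N → Vec d)
include hsp hG1 hN

theorem forall_sub_eq_sum_lamOf_iff (hnn : ∀ i j, 0 ≤ nu i j) :
    (∀ k < N, yp (idx (k + 1)) - yp (idx k) =
        ∑ i, lamOf nu i (idx (N - (k + 1))) • (xp i - xp (idx (N - (k + 1))))) ↔
      ∀ t < N, xp (idx t) - xp none =
        chainWeight nu (N - t) • (yp (idx (N - 1 - t)) - yp (idx N)) := by
  set g : ℕ → Vec d := fun s => (chainWeight nu (s + 1))⁻¹ • (xp (idx (N - 1 - s)) - xp none)
  have hdiff : ∀ k < N, ∑ i, lamOf nu i (idx (N - (k + 1))) • (xp i - xp (idx (N - (k + 1)))) =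
      g (k + 1) - g k := by
    intro k hk
    rw [sum_smul_lamOf nu (Nat.sub_le _ _), show N + 1 - (N - (k + 1)) = k + 1 + 1 by omega,
      show N - (N - (k + 1)) = k + 1 by omega, show N - (k + 1) - 1 = N - 1 - (k + 1) by omega]
    simp only [g, show N - 1 - k = N - (k + 1) by omega]
    module
  have hlast : yp (idx N) - yp (idx N) = g N := by
    simp [g, chainWeight_of_lt nu (Nat.lt_succ_self N)]
  calc _ ↔ ∀ k < N, (yp (idx (k + 1)) - yp (idx N)) - (yp (idx k) - yp (idx N)) =
          g (k + 1) - g k :=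
        forall₂_congr fun k hk => by rw [sub_sub_sub_cancel_right, hdiff k hk]
    _ ↔ ∀ s ≤ N, yp (idx s) - yp (idx N) = g s :=
        ((forall_le_eq_iff_eq_and_sub_eq (f := fun s => yp (idx s) - yp (idx N)) (g := g)
          le_rfl).trans (and_iff_right hlast)).symm
    _ ↔ ∀ s < N, yp (idx s) - yp (idx N) = g s :=
        ⟨fun h s hs => h s hs.le, fun h s hs => hs.lt_or_eq.elim (h s) (· ▸ hlast)⟩
    _ ↔ ∀ s < N, xp (idx (N - 1 - s)) - xp none =
          chainWeight nu (s + 1) • (yp (idx s) - yp (idx N)) :=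
        forall₂_congr fun s hs => by
          have := one_le_chainWeight hsp hG1 hN hnn (Nat.succ_le_of_lt hs)
          rw [eq_inv_smul_iff₀ (by positivity), eq_comm]
    _ ↔ _ := by
        refine Iff.trans (forall₂_congr fun s hs => ?_) forall_lt_sub_one_sub_iff
        beta_reduce
        rw [show N - (N - 1 - s) = s + 1 by omega, show N - 1 - (N - 1 - s) = s by omega]

theorem forall_sub_eq_sum_nu_iff :
    ((∀ k < N, k + 1 < N → xp (idx (k + 1)) - xp (idx k) =
        ∑ i, nu i (idx (N - (k + 1))) • (yp i - yp (idx (N - (k + 1))))) ∧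
      xp (idx 0) - xp none = ∑ i, nu i (idx N) • (yp i - yp (idx N))) ↔
      ∀ t < N, xp (idx t) - xp none =
        chainWeight nu (N - t) • (yp (idx (N - 1 - t)) - yp (idx N)) := by
  set G : ℕ → Vec d := fun t => chainWeight nu (N - t) • (yp (idx (N - 1 - t)) - yp (idx N))
  have hdiff : ∀ k, k + 1 < N →
      ∑ i, nu i (idx (N - (k + 1))) • (yp i - yp (idx (N - (k + 1)))) = G (k + 1) - G k := by
    intro k hk
    obtain ⟨m, hm1, hmN, hm⟩ : ∃ m, 1 ≤ m ∧ m < N ∧ N - (k + 1) = m :=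
      ⟨_, by omega, by omega, rfl⟩
    have ha : nu (idx (m - 1)) (idx m) = chainWeight nu m := by
      simpa [Nat.sub_add_cancel hm1] using (chainWeight_succ_of_lt nu (m := m - 1) (by omega)).symm
    have hb : nu (idx N) (idx m) = chainWeight nu (m + 1) - chainWeight nu m := by
      rw [chainWeight_succ hsp hG1 hN hmN]; ring
    rw [sum_smul_idx_of_relG hsp hN (Nat.sub_le _ _)]
    simp only [G, hm, show N - 1 - (k + 1) = m - 1 by omega, show N - k = m + 1 by omega,
      show N - 1 - k = m by omega, ha, hb]
    module
  have hfirst : ∑ i, nu i (idx N) • (yp i - yp (idx N)) = G 0 := by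
    have ha : nu (idx (N - 1)) (idx N) = chainWeight nu N := by
      simpa [Nat.sub_add_cancel hN] using (chainWeight_succ_of_lt nu (m := N - 1) (by omega)).symm
    rw [sum_smul_idx_of_relG hsp hN le_rfl, sub_self, smul_zero, add_zero, ha]
    simp [G]
  calc _ ↔ xp (idx 0) - xp none = G 0 ∧ ∀ k < N - 1,
          (xp (idx (k + 1)) - xp none) - (xp (idx k) - xp none) = G (k + 1) - G k := by
        rw [and_comm, hfirst]
        refine and_congr_right' ⟨fun h k hk => ?_, fun h k _ hk => ?_⟩
        · rw [sub_sub_sub_cancel_right, h k (by omega) (by omega), hdiff k (by omega)]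
        · rw [hdiff k hk, ← h k (by omega), sub_sub_sub_cancel_right]
    _ ↔ ∀ t ≤ N - 1, xp (idx t) - xp none = G t :=
        (forall_le_eq_iff_eq_and_sub_eq (f := fun t => xp (idx t) - xp none) (g := G)
          (Nat.zero_le _)).symm
    _ ↔ _ := forall_congr' fun t => by rw [Nat.le_sub_one_iff_lt hN]

theorem condX_lamOf_iff (hnn : ∀ i j, 0 ≤ nu i j) :
    CondX (lamOf nu) xp yp ↔ CondExplicit nu xp yp := by
  simp only [CondX, CondExplicit, Fin.forall_iff, some_eq_idx, Fin.val_succ, Fin.val_castSucc,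
    Fin.val_rev, Fin.val_last, Fin.val_zero]
  refine and_congr (forall_sub_eq_sum_lamOf_iff hsp hG1 hN xp yp hnn) ?_
  rw [Fintype.sum_eq_zero _ fun i => by rw [lamOf_none_right, zero_smul], add_zero]
  constructor <;> intro h
  · linear_combination (norm := module) (-2 : ℝ) • h
  · linear_combination (norm := module) (-1 / 2 : ℝ) • h

theorem condY_iff : CondY nu xp yp ↔ CondExplicit nu xp yp := by
  simp only [CondY, CondExplicit, Fin.forall_iff, some_eq_idx, Fin.val_succ, Fin.val_castSucc,
    Fin.val_rev, Fin.val_last, Fin.val_zero]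
  rw [← and_assoc]
  refine and_congr (forall_sub_eq_sum_nu_iff hsp hG1 hN xp yp) ?_
  rw [sum_smul_none_of_relG hsp, apply_last_none_eq_one hsp hG1, one_smul]
  constructor <;> intro h
  · linear_combination (norm := module) (-2 : ℝ) • h
  · linear_combination (norm := module) (-1 / 2 : ℝ) • h

end Conditions

end RelaxedCorrespondence

open RelaxedCorrespondence

theorem relaxed_correspondence_g_to_f_general
    (d N : ℕ) (hN : 1 ≤ N)
    (nu : Idx N → Idx N → ℝ) (hnn : ∀ i j, 0 ≤ nu i j)
    (hG1 : CondG1 nu) (hsp : ∀ i j : Idx N, ¬ RelG N i j → nu i j = 0) :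
    ∃ lam : Idx N → Idx N → ℝ,
      (∀ i j, 0 ≤ lam i j) ∧ (∀ i, lam i i = 0) ∧ CondF1 lam ∧
      (∀ i j : Idx N, ¬ RelF N i j → lam i j = 0) ∧
      ∀ xp yp : Idx N → Vec d, CondX lam xp yp ↔ CondY nu xp yp :=
  ⟨lamOf nu, lamOf_nonneg hsp hG1 hN hnn, lamOf_self nu, condF1_lamOf nu,
    lamOf_eq_zero_of_not_relF nu, fun xp yp =>
      (condX_lamOf_iff hsp hG1 hN xp yp hnn).trans (condY_iff hsp hG1 hN xp yp).symm⟩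

/-- **Relaxed multiplier correspondence, direction (i) (Lemma relaxed, part i).**
If nonnegative multipliers `ν` (zero diagonal) satisfy `(G1)` and the sparsity pattern
`(relaxed-g)`, then there exist nonnegative multipliers `λ` (zero diagonal) satisfying
`(F1)` and the sparsity pattern `(relaxed-f)` such that, for all points, condition `(X_λ)`
holds if and only if condition `(Y_ν)` holds. -/
theorem relaxed_correspondence_g_to_f
    (d N : ℕ) (hd : 1 ≤ d) (hN : 1 ≤ N)
    (nu : Idx N → Idx N → ℝ) (hnn : ∀ i j, 0 ≤ nu i j) (hdiag : ∀ i, nu i i = 0)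
    (hG1 : CondG1 nu) (hsp : ∀ i j : Idx N, ¬ RelG N i j → nu i j = 0) :
    ∃ lam : Idx N → Idx N → ℝ,
      (∀ i j, 0 ≤ lam i j) ∧ (∀ i, lam i i = 0) ∧ CondF1 lam ∧
      (∀ i j : Idx N, ¬ RelF N i j → lam i j = 0) ∧
      ∀ xp yp : Idx N → Vec d, CondX lam xp yp ↔ CondY nu xp yp :=
  relaxed_correspondence_g_to_f_general d N hN nu hnn hG1 hsp
end

section
/- Let τ > 0 and let ν : I_N × I_N → ℝ be nonnegative with zero diagonal and with ν_{i,j} = 0 for every (i,j) not of the form (k,k+1), (k+1,k), or (N,k) with 0 ≤ k ≤ N−1. Suppose that: (G1') for every k ∈ I_N, ∑_{i∈I_N} ν_{i,k} − ∑_{j∈I_N} ν_{k,j} = 1 if k = N, = −1 if k = 0, and = 0 otherwise; and (G2') the symmetric matrix (𝐒 + 𝐒ᵀ)/2 is positive semidefinite, where 𝐒 = Aᵀ·H̃^{−A} + (κ/(2(1−κ)))·B + (1/2)·h_0h_0ᵀ − (L/(2τ))·h_Nh_Nᵀ. Then for all families {y_i}_{i∈I_N}, {g_i}_{i∈I_N}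 in ℝ^d and {f_i}_{i∈I_N} in ℝ with y_0,…,y_N generated by the algorithm H^A from g_0,…,g_{N−1}, one has (1/(2τ) − 1/(2L))‖g_N‖² − f_0 + f_N ≤ ∑_{i,j∈I_N} ν_{i,j}·Φ_{i,j} (with p_i = y_i). -/
open Finset
open scoped RealInnerProductSpace Matrix

/-- The `(N+1) × (N+1)` matrix `A` of the semidefinite reformulation, built from the
multipliers `ν` on `I_N × I_N` (0-indexed): `A_{i,i} = a_i = ν_{i−1,i}` for `i ≥ 1`,
`A_{i,i+1} = b_i` where `b_i = −ν_{i+1,i} − ν_{N,i}` for `i ≤ N−2` and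
`b_{N−1} = −ν_{N,N−1}`, `A_{i,j} = c_i = −ν_{N,i}` for `j ≥ i+2`, and `0` otherwise. -/
noncomputable def matA {N : ℕ} (nu : Fin (N + 1) → Fin (N + 1) → ℝ) :
    Matrix (Fin (N + 1)) (Fin (N + 1)) ℝ :=
  fun i j =>
    if (i : ℕ) = (j : ℕ) ∧ 1 ≤ (i : ℕ) then
      nu ⟨(i : ℕ) - 1, by have := i.isLt; omega⟩ i
    else if (j : ℕ) = (i : ℕ) + 1 then
      (if (i : ℕ) = N - 1 then -nu (Fin.last N) i else -nu j i - nu (Fin.last N) i)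
    else if (i : ℕ) + 2 ≤ (j : ℕ) then -nu (Fin.last N) i
    else 0

/-- The `(N+1) × (N+1)` matrix `B` of the semidefinite reformulation, built from the
multipliers `ν` on `I_N × I_N` (0-indexed): the first row and column vanish,
`B_{i,i} = d_i` where `d_i = ν_{i−1,i} + ν_{i,i−1} + ∑_{l<i} ν_{N,l}` for `1 ≤ i ≤ N−1`
and `d_N = ν_{N−1,N} + ∑_{l<N} ν_{N,l}`, and `B_{i,j} = e_{min(i,j)} = ∑_{l<min(i,j)}
ν_{N,l}` for distinct nonzero `i, j`. -/
noncomputable def matB {N : ℕ} (nu : Fin (N + 1) → Fin (N + 1) → ℝ) :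
    Matrix (Fin (N + 1)) (Fin (N + 1)) ℝ :=
  fun i j =>
    if (i : ℕ) = 0 ∨ (j : ℕ) = 0 then 0
    else if (i : ℕ) = (j : ℕ) then
      (if (i : ℕ) = N then
          nu ⟨N - 1, by omega⟩ (Fin.last N)
            + ∑ l : Fin (N + 1), (if (l : ℕ) < N then nu (Fin.last N) l else 0)
        else
          nu ⟨(i : ℕ) - 1, by have := i.isLt; omega⟩ i
            + nu i ⟨(i : ℕ) - 1, by have := i.isLt; omega⟩
            + ∑ l : Fin (N + 1), (if (l : ℕ) < (i : ℕ) then nu (Fin.last N) l else 0))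
    else ∑ l : Fin (N + 1), (if (l : ℕ) < min (i : ℕ) (j : ℕ) then nu (Fin.last N) l else 0)

/-- The PEP matrix `𝐒 = Aᵀ H̃^{−A} + (κ/(2(1−κ))) B + (1/2) h₀h₀ᵀ − (L/(2τ)) h_N h_Nᵀ`,
where `κ = μ/L`, `H̃^{−A}` is the anti-transpose of `H̃⁻¹`, and `h₀`, `h_N` are the first
and last rows of `H̃^{−A}`. -/
noncomputable def Smat {N : ℕ} (L μ τ : ℝ) (H : Matrix (Fin N) (Fin N) ℝ)
    (nu : Fin (N + 1) → Fin (N + 1) → ℝ) : Matrix (Fin (N + 1)) (Fin (N + 1)) ℝ :=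
  (matA nu)ᵀ * antiT ((Htilde H)⁻¹)
    + ((μ / L) / (2 * (1 - μ / L))) • matB nu
    + (1 / 2 : ℝ) • Matrix.vecMulVec (fun j => antiT ((Htilde H)⁻¹) 0 j)
        (fun j => antiT ((Htilde H)⁻¹) 0 j)
    - (L / (2 * τ)) • Matrix.vecMulVec (fun j => antiT ((Htilde H)⁻¹) (Fin.last N) j)
        (fun j => antiT ((Htilde H)⁻¹) (Fin.last N) j)

/-!
Put `Z_i = L y_i − g_i` and `v = (g_0, Z_0 − Z_1, …, Z_{N−1} − Z_N)`. The algorithm `Hᴬ` says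
exactly that `v = H̃ᴬ g`, so `g = H̃^{−A} v`. In terms of `Z` and `g`, `Φ_{i,j}` is
`f_j − f_i`, plus `−‖g‖²/(2L)` differenced along `(i, j)`, plus `⟪g_j, Z_i − Z_j⟫ / L`, plus
`μ/(2L(L−μ)) ‖Z_i − Z_j‖²`. Since `Z_i − Z_j` is a signed sum of consecutive `v_a`, on the sparsity
pattern of `ν` the last two sums become `∑ A_{c,a} ⟪v_a, g_c⟫` and `∑ B_{a,b} ⟪v_a, v_b⟫`, while
`(G1')` telescopes the first two. Altogether `∑ ν_{i,j} Φ_{i,j}` exceeds the left-hand side by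
`(1/L) ∑ 𝐒_{a,b} ⟪v_a, v_b⟫`, which is nonnegative because the symmetric part of `𝐒` is positive
semidefinite.
-/

namespace Matrix

variable {ι E : Type*} [Fintype ι] [NormedAddCommGroup E] [InnerProductSpace ℝ E]

def gramForm (u : ι → E) : Matrix ι ι ℝ →ₗ[ℝ] ℝ where
  toFun S := ∑ a, ∑ b, S a b * ⟪u a, u b⟫
  map_add' S T := by simp only [add_apply, add_mul, Finset.sum_add_distrib]
  map_smul' c S := by
    simp only [smul_apply, smul_eq_mul, mul_assoc, Finset.mul_sum, RingHom.id_apply]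

lemma gramForm_apply (u : ι → E) (S : Matrix ι ι ℝ) :
    gramForm u S = ∑ a, ∑ b, S a b * ⟪u a, u b⟫ := rfl

lemma gramForm_transpose (u : ι → E) (S : Matrix ι ι ℝ) : gramForm u Sᵀ = gramForm u S := by
  rw [gramForm_apply, Finset.sum_comm]
  simp only [gramForm_apply, transpose_apply, real_inner_comm]

lemma gramForm_vecMulVec (u : ι → E) (x y : ι → ℝ) :
    gramForm u (vecMulVec x y) = ⟪∑ a, x a • u a, ∑ b, y b • u b⟫ := by
  simp_rw [gramForm_apply, vecMulVec_apply, sum_inner, real_inner_smul_left, inner_sum,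
    real_inner_smul_right, Finset.mul_sum, mul_assoc]

lemma gramForm_transpose_mul {κ : Type*} [Fintype κ] (u : ι → E) (M P : Matrix κ ι ℝ) :
    gramForm u (Mᵀ * P) = ∑ c, ⟪∑ a, M c a • u a, ∑ b, P c b • u b⟫ := by
  simp_rw [gramForm_apply, mul_apply, transpose_apply, sum_inner, real_inner_smul_left, inner_sum,
    real_inner_smul_right, Finset.sum_mul, Finset.mul_sum, mul_assoc]
  exact (Finset.sum_congr rfl fun a _ => Finset.sum_comm).trans Finset.sum_comm

open scoped MatrixOrder in
lemma PosSemidef.gramForm_nonneg {P : Matrix ι ι ℝ} (hP : P.PosSemidef) (u : ι → E) :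
    0 ≤ gramForm u P := by
  classical
  obtain ⟨B, rfl⟩ := CStarAlgebra.nonneg_iff_eq_star_mul_self.mp hP.nonneg
  rw [star_eq_conjTranspose, conjTranspose_eq_transpose_of_trivial, gramForm_transpose_mul]
  exact Finset.sum_nonneg fun c _ => real_inner_self_nonneg

lemma gramForm_nonneg_of_posSemidef_symm {S : Matrix ι ι ℝ}
    (hS : ((1 / 2 : ℝ) • (S + Sᵀ)).PosSemidef) (u : ι → E) : 0 ≤ gramForm u S := by
  have := hS.gramForm_nonneg u
  rwa [map_smul, map_add, gramForm_transpose, smul_eq_mul, ← two_mul, ← mul_assoc,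
    one_div_mul_cancel two_ne_zero, one_mul] at this

end Matrix

section AntiTranspose

variable {n : ℕ}

lemma antiT_mul (P Q : Matrix (Fin n) (Fin n) ℝ) : antiT P * antiT Q = antiT (Q * P) := by
  ext i j
  simp only [antiT, Matrix.mul_apply]
  exact Fintype.sum_equiv Fin.revPerm _ _ fun k => by simp [mul_comm]

lemma antiT_one : antiT (1 : Matrix (Fin n) (Fin n) ℝ) = 1 := by
  ext i j
  simp [antiT, Matrix.one_apply, eq_comm]

lemma sum_antiT_smul {E : Type*} [AddCommMonoid E] [Module ℝ E]
    (M : Matrix (Fin n) (Fin n) ℝ) (g : Fin n → E) (a : Fin n) :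
    ∑ b, antiT M a b • g b = ∑ i, M i a.rev • g i.rev :=
  Fintype.sum_equiv Fin.revPerm _ _ fun b => by simp [antiT]

end AntiTranspose

lemma sum_smul_sum_smul_of_mul_eq_one {ι E : Type*} [Fintype ι] [DecidableEq ι]
    [AddCommMonoid E] [Module ℝ E] {P Q : Matrix ι ι ℝ} (hPQ : P * Q = 1) (g : ι → E) (c : ι) :
    ∑ b, P c b • ∑ e, Q b e • g e = g c := by
  simp_rw [Finset.smul_sum, smul_smul]
  rw [Finset.sum_comm]
  simp_rw [← Finset.sum_smul, ← Matrix.mul_apply, hPQ, Matrix.one_apply, ite_smul, one_smul,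
    zero_smul, Finset.sum_ite_eq, Finset.mem_univ, if_true]

section Htilde

variable {N : ℕ} (H : Matrix (Fin N) (Fin N) ℝ)

lemma Htilde_isLowerTriangular : (Htilde H).IsLowerTriangular := fun i j (h : i < j) => by
  rw [Fin.lt_def] at h
  unfold Htilde
  rw [if_neg (by omega), dif_neg (by omega), dif_neg (by omega)]

lemma Htilde_apply_self (i : Fin (N + 1)) : Htilde H i i = 1 := if_pos rfl

lemma Htilde_mul_inv : Htilde H * (Htilde H)⁻¹ = 1 := by
  refine Matrix.mul_nonsing_inv _ ?_
  rw [Matrix.det_of_isLowerTriangular _ (Htilde_isLowerTriangular H)]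
  simp [Htilde_apply_self]

lemma antiT_Htilde_inv_mul : antiT (Htilde H)⁻¹ * antiT (Htilde H) = 1 := by
  rw [antiT_mul, Htilde_mul_inv, antiT_one]

lemma Htilde_apply_last (i : Fin (N + 1)) :
    Htilde H i (Fin.last N) = if i = Fin.last N then 1 else 0 := by
  have := i.isLt
  unfold Htilde
  simp only [Fin.ext_iff, Fin.val_last]
  split_ifs <;> first | rfl | omega

lemma Htilde_apply_castSucc (i : Fin (N + 1)) (q : Fin N) :
    Htilde H i q.castSucc = (if i = q.castSucc then 1 else 0) - (if i = q.succ then 1 else 0)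
      + Fin.cases 0 (fun p => if q ≤ p then H p q else 0) i := by
  induction i using Fin.cases with
  | zero =>
    simp [Htilde, Fin.ext_iff, eq_comm]
  | succ p =>
    obtain rfl | hpq := eq_or_ne p q
    · simp [Htilde, Fin.ext_iff]; ring
    have := Fin.val_ne_iff.mpr hpq
    unfold Htilde
    simp only [Fin.ext_iff, Fin.val_castSucc, Fin.val_succ, Fin.cases_succ, Fin.le_def]
    split_ifs <;> first | omega | simp

end Htilde

section Algorithm

variable {d N : ℕ}

def scaledGradStep {ι E : Type*} [AddCommGroup E] [Module ℝ E] (L : ℝ) (y g : ι → E) (i : ι) :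
    E :=
  L • y i - g i

def stepDiffs (L : ℝ) (y g : Fin (N + 1) → Vec d) : Fin (N + 1) → Vec d :=
  Fin.cons (g 0) fun k => scaledGradStep L y g k.castSucc - scaledGradStep L y g k.succ

lemma stepDiffs_succ (L : ℝ) (y g : Fin (N + 1) → Vec d) (k : Fin N) :
    stepDiffs L y g k.succ = scaledGradStep L y g k.castSucc - scaledGradStep L y g k.succ :=
  Fin.cons_succ _ _ k

lemma GenBy.scaledGradStep_sub {L : ℝ} (hL : L ≠ 0) {M : Matrix (Fin N) (Fin N) ℝ}
    {y g : Fin (N + 1) → Vec d} (hgen : GenBy L M y g) (k : Fin N) :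
    scaledGradStep L y g k.castSucc - scaledGradStep L y g k.succ
      = g k.succ - g k.castSucc
        + ∑ j : Fin N, if (j : ℕ) ≤ (k : ℕ) then M k j • g j.castSucc else 0 := by
  have hy : L • (y k.castSucc - y k.succ)
      = ∑ j : Fin N, if (j : ℕ) ≤ (k : ℕ) then M k j • g j.castSucc else 0 := by
    rw [← neg_sub, hgen k, neg_smul, neg_neg, smul_smul, mul_one_div_cancel hL, one_smul]
  rw [← hy, scaledGradStep, scaledGradStep, smul_sub]
  abel

lemma GenBy.stepDiffs_eq {L : ℝ} (hL : L ≠ 0) {H : Matrix (Fin N) (Fin N) ℝ}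
    {y g : Fin (N + 1) → Vec d} (hgen : GenBy L (antiT H) y g) (a : Fin (N + 1)) :
    stepDiffs L y g a = ∑ b, antiT (Htilde H) a b • g b := by
  rw [sum_antiT_smul]
  refine Fin.cases ?_ (fun k => ?_) a
  · simp [stepDiffs, Htilde_apply_last]
  · rw [stepDiffs, Fin.cons_succ, hgen.scaledGradStep_sub hL, Fin.rev_succ]
    simp_rw [Htilde_apply_castSucc, add_smul, sub_smul, ite_smul, one_smul, zero_smul,
      Finset.sum_add_distrib, Finset.sum_sub_distrib, Finset.sum_ite_eq', Finset.mem_univ,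
      if_true, Fin.sum_univ_succ, Fin.cases_zero, Fin.cases_succ, zero_smul, zero_add]
    simp only [Fin.rev_castSucc, Fin.rev_succ, Fin.rev_rev]
    congr 1
    refine Fintype.sum_equiv Fin.revPerm _ _ fun j => ?_
    simp only [Fin.revPerm_apply, Fin.rev_rev, Fin.rev_le_rev, ite_smul, zero_smul]
    rfl

lemma GenBy.sum_antiT_Htilde_inv_smul_stepDiffs {L : ℝ} (hL : L ≠ 0)
    {H : Matrix (Fin N) (Fin N) ℝ} {y g : Fin (N + 1) → Vec d} (hgen : GenBy L (antiT H) y g)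
    (c : Fin (N + 1)) :
    ∑ b, antiT (Htilde H)⁻¹ c b • stepDiffs L y g b = g c := by
  simp_rw [hgen.stepDiffs_eq hL]
  exact sum_smul_sum_smul_of_mul_eq_one (antiT_Htilde_inv_mul H) g c

end Algorithm

lemma Fin.sum_ite_val_eq_and {M : Type*} [AddCommMonoid M] {n : ℕ} (v : ℕ) (p : Prop)
    [Decidable p] (F : Fin n → M) :
    ∑ i : Fin n, (if (i : ℕ) = v ∧ p then F i else 0) =
      if h : v < n ∧ p then F ⟨v, h.1⟩ else 0 := by
  split_ifs with h
  · rw [Finset.sum_eq_single ⟨v, h.1⟩ (fun i _ hi => if_neg fun hv => hi (Fin.ext hv.1))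
      (by simp), if_pos ⟨rfl, h.2⟩]
  · exact Finset.sum_eq_zero fun i _ =>
      if_neg fun (hv : (i : ℕ) = v ∧ p) => h ⟨hv.1 ▸ i.isLt, hv.2⟩

section Multipliers

variable {N : ℕ}

def BandSupported (nu : Fin (N + 1) → Fin (N + 1) → ℝ) : Prop :=
  ∀ i j : Fin (N + 1),
    ¬ ((j : ℕ) = (i : ℕ) + 1 ∨ (i : ℕ) = (j : ℕ) + 1 ∨ ((i : ℕ) = N ∧ (j : ℕ) < N)) →
      nu i j = 0

/-- The entry `ν_{N,N−1}` is counted in the last summand, not in the middle one. -/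
lemma BandSupported.sum_col_mul {nu : Fin (N + 1) → Fin (N + 1) → ℝ} (hnu : BandSupported nu)
    (c : Fin (N + 1)) (w : Fin (N + 1) → ℝ) :
    ∑ i, nu i c * w i =
      (if h : (c : ℕ) - 1 < N + 1 ∧ 1 ≤ (c : ℕ) then
        nu ⟨(c : ℕ) - 1, h.1⟩ c * w ⟨(c : ℕ) - 1, h.1⟩ else 0)
      + (if h : (c : ℕ) + 1 < N + 1 ∧ (c : ℕ) + 1 < N then
          nu ⟨(c : ℕ) + 1, h.1⟩ c * w ⟨(c : ℕ) + 1, h.1⟩ else 0)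
      + (if (c : ℕ) < N then nu (Fin.last N) c * w (Fin.last N) else 0) := by
  have hsplit : ∀ i, nu i c * w i =
      (if (i : ℕ) = (c : ℕ) - 1 ∧ 1 ≤ (c : ℕ) then nu i c * w i else 0)
      + (if (i : ℕ) = (c : ℕ) + 1 ∧ (c : ℕ) + 1 < N then nu i c * w i else 0)
      + (if (i : ℕ) = N ∧ (c : ℕ) < N then nu i c * w i else 0) := by
    intro i
    have := i.isLt
    split_ifs <;> first | omega | (rw [hnu i c (by omega)]; ring) | ring
  simp_rw [Finset.sum_congr rfl fun i _ => hsplit i, Finset.sum_add_distrib,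
    Fin.sum_ite_val_eq_and]
  congr 1
  split_ifs <;> first | rfl | omega

def upperOnes (n : ℕ) (i a : Fin n) : ℝ := if i < a then 1 else 0

lemma matA_apply_eq_sum {nu : Fin (N + 1) → Fin (N + 1) → ℝ} (hnu : BandSupported nu)
    (c a : Fin (N + 1)) :
    matA nu c a = ∑ i, nu i c * (upperOnes (N + 1) i a - upperOnes (N + 1) c a) := by
  rw [hnu.sum_col_mul]
  obtain ⟨a, ha⟩ := a
  rcases eq_or_ne a (c + 1) with rfl | h <;>
    simp only [matA, upperOnes, Fin.lt_def, Fin.val_last] <;>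
    split_ifs <;> first | omega | (simp <;> ring)

def matBSummand (nu : Fin (N + 1) → Fin (N + 1) → ℝ) (a b j : Fin (N + 1)) : ℝ :=
  (if (j : ℕ) = a ∧ (a = b ∧ 1 ≤ (a : ℕ)) then nu ⟨(a : ℕ) - 1, by omega⟩ a else 0)
    + (if (j : ℕ) = (a : ℕ) - 1 ∧ (a = b ∧ 1 ≤ (a : ℕ) ∧ (a : ℕ) < N) then
        nu a ⟨(a : ℕ) - 1, by omega⟩ else 0)
    + (if (j : ℕ) < min (a : ℕ) (b : ℕ) then nu (Fin.last N) j else 0)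

lemma BandSupported.sum_mul_upperOnes_sq {nu : Fin (N + 1) → Fin (N + 1) → ℝ}
    (hnu : BandSupported nu) (a b j : Fin (N + 1)) :
    ∑ i, nu i j * ((upperOnes (N + 1) i a - upperOnes (N + 1) j a)
        * (upperOnes (N + 1) i b - upperOnes (N + 1) j b)) = matBSummand nu a b j := by
  rw [hnu.sum_col_mul]
  obtain ⟨a, ha⟩ := a
  obtain ⟨b, hb⟩ := b
  obtain ⟨j, hj⟩ := j
  simp only [matBSummand, upperOnes, Fin.lt_def, Fin.val_last, Fin.ext_iff]
  congr 1
  congr 1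
  all_goals split_ifs <;> first
    | omega
    | (simp; done)
    | (have e : j = a := by omega
       subst e; simp)
    | (have e : a = j + 1 := by omega
       subst e; simp)

lemma matB_apply_eq_sum (nu : Fin (N + 1) → Fin (N + 1) → ℝ) (a b : Fin (N + 1)) :
    matB nu a b = ∑ j, matBSummand nu a b j := by
  simp only [matBSummand, Finset.sum_add_distrib, Fin.sum_ite_val_eq_and]
  obtain ⟨a, ha⟩ := a
  obtain ⟨b, hb⟩ := b
  simp only [matB, Fin.ext_iff]
  split_ifs <;> first
    | omega
    | (simp; done)
    | (subst_vars; simp; done)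
    | (rcases ‹_ ∨ _› with rfl | rfl <;> simp)
    | (obtain rfl : a = b := by omega
       obtain rfl : N = a := by omega
       simp [Fin.last])

lemma matB_apply_eq_sum_sum {nu : Fin (N + 1) → Fin (N + 1) → ℝ} (hnu : BandSupported nu)
    (a b : Fin (N + 1)) :
    matB nu a b = ∑ i, ∑ j, nu i j * ((upperOnes (N + 1) i a - upperOnes (N + 1) j a)
        * (upperOnes (N + 1) i b - upperOnes (N + 1) j b)) := by
  rw [Finset.sum_comm, matB_apply_eq_sum]
  simp_rw [hnu.sum_mul_upperOnes_sq]

end Multipliers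

section Quadratic

variable {N : ℕ} {E : Type*} [NormedAddCommGroup E] [InnerProductSpace ℝ E]

lemma sub_last_eq_sum_upperOnes_smul {Z v : Fin (N + 1) → E}
    (hv : ∀ k : Fin N, v k.succ = Z k.castSucc - Z k.succ) (i : Fin (N + 1)) :
    Z i - Z (Fin.last N) = ∑ a, upperOnes (N + 1) i a • v a := by
  induction i using Fin.reverseInduction with
  | last => simp [upperOnes, not_lt.mpr (Fin.le_last _)]
  | cast k ih =>
    have hU : ∀ a, upperOnes (N + 1) k.castSucc a
        = (if a = k.succ then 1 else 0) + upperOnes (N + 1) k.succ a := by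
      intro a
      simp only [upperOnes, Fin.lt_def, Fin.ext_iff, Fin.val_castSucc, Fin.val_succ]
      split_ifs <;> first | omega | norm_num
    simp_rw [hU, add_smul, ite_smul, one_smul, zero_smul, Finset.sum_add_distrib,
      Finset.sum_ite_eq', Finset.mem_univ, if_true, ← ih, hv]
    abel

lemma sub_eq_sum_upperOnes_smul {Z v : Fin (N + 1) → E}
    (hv : ∀ k : Fin N, v k.succ = Z k.castSucc - Z k.succ) (i j : Fin (N + 1)) :
    Z i - Z j = ∑ a, (upperOnes (N + 1) i a - upperOnes (N + 1) j a) • v a := by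
  rw [← sub_sub_sub_cancel_right _ _ (Z (Fin.last N)), sub_last_eq_sum_upperOnes_smul hv,
    sub_last_eq_sum_upperOnes_smul hv, ← Finset.sum_sub_distrib]
  simp_rw [sub_smul]

variable {nu : Fin (N + 1) → Fin (N + 1) → ℝ} {Z v : Fin (N + 1) → E}

lemma BandSupported.sum_sum_mul_inner_sub (hnu : BandSupported nu)
    (hv : ∀ k : Fin N, v k.succ = Z k.castSucc - Z k.succ) (g : Fin (N + 1) → E) :
    ∑ i, ∑ j, nu i j * ⟪g j, Z i - Z j⟫ = ∑ c, ⟪∑ a, matA nu c a • v a, g c⟫ := by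
  have hcol : ∀ c, ∑ a, matA nu c a • v a = ∑ i, nu i c • (Z i - Z c) := by
    intro c
    simp_rw [matA_apply_eq_sum hnu, sub_eq_sum_upperOnes_smul hv, Finset.sum_smul,
      Finset.smul_sum, smul_smul]
    exact Finset.sum_comm
  simp_rw [hcol, sum_inner, real_inner_smul_left, real_inner_comm (g _)]
  exact Finset.sum_comm

lemma BandSupported.sum_sum_mul_norm_sub_sq (hnu : BandSupported nu)
    (hv : ∀ k : Fin N, v k.succ = Z k.castSucc - Z k.succ) :
    ∑ i, ∑ j, nu i j * ‖Z i - Z j‖ ^ 2 = Matrix.gramForm v (matB nu) := by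
  have hB : matB nu = ∑ i, ∑ j, nu i j • Matrix.vecMulVec
      (fun a => upperOnes (N + 1) i a - upperOnes (N + 1) j a)
      (fun a => upperOnes (N + 1) i a - upperOnes (N + 1) j a) := by
    ext a b
    simp only [matB_apply_eq_sum_sum hnu, Matrix.sum_apply, Matrix.smul_apply, smul_eq_mul,
      Matrix.vecMulVec_apply]
  simp_rw [hB, map_sum, map_smul, Matrix.gramForm_vecMulVec, ← sub_eq_sum_upperOnes_smul hv,
    real_inner_self_eq_norm_sq, smul_eq_mul]

end Quadratic

lemma sum_sum_mul_sub_eq_sum_netFlow_mul {ι : Type*} [Fintype ι] (nu : ι → ι → ℝ)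
    (φ : ι → ℝ) :
    ∑ i, ∑ j, nu i j * (φ j - φ i) = ∑ k, ((∑ i, nu i k) - ∑ j, nu k j) * φ k := by
  simp_rw [mul_sub, Finset.sum_sub_distrib, sub_mul, Finset.sum_mul, Finset.sum_sub_distrib]
  rw [Finset.sum_comm]

lemma sum_sum_mul_sub_eq_of_netFlow {N : ℕ} (hN : 1 ≤ N) {nu : Fin (N + 1) → Fin (N + 1) → ℝ}
    (hflow : ∀ k : Fin (N + 1), (∑ i, nu i k) - ∑ j, nu k j =
      if k = Fin.last N then 1 else if k = 0 then -1 else 0) (φ : Fin (N + 1) → ℝ) :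
    ∑ i, ∑ j, nu i j * (φ j - φ i) = φ (Fin.last N) - φ 0 := by
  have hne : Fin.last N ≠ 0 := Fin.ext_iff.not.mpr (by simp; omega)
  rw [sum_sum_mul_sub_eq_sum_netFlow_mul, Fintype.sum_eq_add (Fin.last N) 0 hne
    fun k hk => by simp [hflow, hk.1, hk.2]]
  simp [hflow, hne.symm]
  ring

lemma Phi_eq {d : ℕ} {ι : Type*} {L : ℝ} (μ : ℝ) (hL : L ≠ 0) (hμL : L - μ ≠ 0)
    (p g : ι → Vec d) (f : ι → ℝ) (i j : ι) :
    Phi L μ p g f i j = f j - f i + (-(1 / (2 * L)) * ‖g j‖ ^ 2 - -(1 / (2 * L)) * ‖g i‖ ^ 2)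
      + 1 / L * ⟪g j, scaledGradStep L p g i - scaledGradStep L p g j⟫
      + μ / (2 * L * (L - μ)) * ‖scaledGradStep L p g i - scaledGradStep L p g j‖ ^ 2 := by
  have hZ : scaledGradStep L p g i - scaledGradStep L p g j
      = L • (p i - p j - (1 / L) • (g i - g j)) := by
    rw [scaledGradStep, scaledGradStep, smul_sub, smul_sub, smul_smul, mul_one_div_cancel hL,
      one_smul]
    abel
  rw [hZ, norm_smul, mul_pow, Real.norm_eq_abs, sq_abs, inner_smul_right, Phi]
  simp only [← real_inner_self_eq_norm_sq, inner_sub_left, inner_sub_right, real_inner_smul_left,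
    real_inner_smul_right, real_inner_comm (g i)]
  field_simp
  ring

lemma gramForm_Smat {N : ℕ} {E : Type*} [NormedAddCommGroup E] [InnerProductSpace ℝ E]
    (L μ τ : ℝ) (H : Matrix (Fin N) (Fin N) ℝ) (nu : Fin (N + 1) → Fin (N + 1) → ℝ)
    {v g : Fin (N + 1) → E} (hg : ∀ c, ∑ b, antiT (Htilde H)⁻¹ c b • v b = g c) :
    Matrix.gramForm v (Smat L μ τ H nu)
      = ∑ c, ⟪∑ a, matA nu c a • v a, g c⟫
        + (μ / L) / (2 * (1 - μ / L)) * Matrix.gramForm v (matB nu)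
        + 1 / 2 * ‖g 0‖ ^ 2 - L / (2 * τ) * ‖g (Fin.last N)‖ ^ 2 := by
  simp only [Smat, map_add, map_sub, map_smul, Matrix.gramForm_transpose_mul,
    Matrix.gramForm_vecMulVec, hg, real_inner_self_eq_norm_sq, smul_eq_mul]

lemma sum_sum_mul_Phi_eq {d N : ℕ} (hN : 1 ≤ N) {L μ : ℝ} (hL : L ≠ 0) (hμL : L - μ ≠ 0)
    {nu : Fin (N + 1) → Fin (N + 1) → ℝ} (hnu : BandSupported nu)
    (hflow : ∀ k : Fin (N + 1), (∑ i, nu i k) - ∑ j, nu k j =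
      if k = Fin.last N then 1 else if k = 0 then -1 else 0)
    (y g : Fin (N + 1) → Vec d) (f : Fin (N + 1) → ℝ) :
    ∑ i, ∑ j, nu i j * Phi L μ y g f i j
      = f (Fin.last N) - f 0
        + (-(1 / (2 * L)) * ‖g (Fin.last N)‖ ^ 2 - -(1 / (2 * L)) * ‖g 0‖ ^ 2)
        + 1 / L * ∑ c, ⟪∑ a, matA nu c a • stepDiffs L y g a, g c⟫
        + μ / (2 * L * (L - μ)) * Matrix.gramForm (stepDiffs L y g) (matB nu) := by
  simp_rw [Phi_eq μ hL hμL, mul_add, Finset.sum_add_distrib, mul_left_comm _ (1 / L),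
    mul_left_comm _ (μ / (2 * L * (L - μ))), ← Finset.mul_sum]
  rw [sum_sum_mul_sub_eq_of_netFlow hN hflow, sum_sum_mul_sub_eq_of_netFlow hN hflow,
    hnu.sum_sum_mul_inner_sub (stepDiffs_succ L y g),
    hnu.sum_sum_mul_norm_sub_sq (stepDiffs_succ L y g)]

theorem pep_semidefinite_sufficiency_general
    (d N : ℕ) (hN : 1 ≤ N) (L μ : ℝ) (hL : 0 < L) (hμL : μ < L)
    (H : Matrix (Fin N) (Fin N) ℝ)
    (τ : ℝ)
    (nu : Fin (N + 1) → Fin (N + 1) → ℝ)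
    (hsp : ∀ i j : Fin (N + 1),
      ¬ ((j : ℕ) = (i : ℕ) + 1 ∨ (i : ℕ) = (j : ℕ) + 1 ∨
          ((i : ℕ) = N ∧ (j : ℕ) < N)) → nu i j = 0)
    (hG1' : ∀ k : Fin (N + 1), (∑ i : Fin (N + 1), nu i k) - ∑ j : Fin (N + 1), nu k j =
      if k = Fin.last N then 1 else if k = 0 then -1 else 0)
    (hpsd : ((1 / 2 : ℝ) • (Smat L μ τ H nu + (Smat L μ τ H nu)ᵀ)).PosSemidef) :
    ∀ (y g : Fin (N + 1) → Vec d) (f : Fin (N + 1) → ℝ),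
      GenBy L (antiT H) y g →
      (1 / (2 * τ) - 1 / (2 * L)) * ‖g (Fin.last N)‖ ^ 2 - f 0 + f (Fin.last N) ≤
        ∑ i : Fin (N + 1), ∑ j : Fin (N + 1), nu i j * Phi L μ y g f i j := by
  intro y g f hgen
  have hgap : ∑ i, ∑ j, nu i j * Phi L μ y g f i j
      - ((1 / (2 * τ) - 1 / (2 * L)) * ‖g (Fin.last N)‖ ^ 2 - f 0 + f (Fin.last N))
      = Matrix.gramForm (stepDiffs L y g) (Smat L μ τ H nu) / L := by
    rw [sum_sum_mul_Phi_eq hN hL.ne' (sub_ne_zero.2 hμL.ne') hsp hG1',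
      gramForm_Smat L μ τ H nu (hgen.sum_antiT_Htilde_inv_smul_stepDiffs hL.ne')]
    field_simp
    ring
  linarith [div_nonneg (Matrix.gramForm_nonneg_of_posSemidef_symm hpsd (stepDiffs L y g)) hL.le]

/-- **Sufficiency of the semidefinite certificate (Theorem pep).**  Let `τ > 0` and let
`ν` be nonnegative multipliers on `I_N × I_N` with zero diagonal, supported on pairs
`(k, k+1)`, `(k+1, k)`, `(N, k)` with `0 ≤ k ≤ N−1`.  If `(G1')` holds and
`(𝐒 + 𝐒ᵀ)/2` is positive semidefinite, then for all families `{y_i}, {g_i}, {f_i}` with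
`y_0, …, y_N` generated by the algorithm `Hᴬ`, one has
`(1/(2τ) − 1/(2L))‖g_N‖² − f_0 + f_N ≤ ∑_{i,j∈I_N} ν_{i,j} Φ_{i,j}`. -/
theorem pep_semidefinite_sufficiency
    (d N : ℕ) (hd : 1 ≤ d) (hN : 1 ≤ N) (L μ : ℝ) (hL : 0 < L) (hμL : μ < L)
    (H : Matrix (Fin N) (Fin N) ℝ) (hH : ∀ i j : Fin N, (i : ℕ) < (j : ℕ) → H i j = 0)
    (τ : ℝ) (hτ : 0 < τ)
    (nu : Fin (N + 1) → Fin (N + 1) → ℝ)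
    (hnn : ∀ i j, 0 ≤ nu i j) (hdiag : ∀ i, nu i i = 0)
    (hsp : ∀ i j : Fin (N + 1),
      ¬ ((j : ℕ) = (i : ℕ) + 1 ∨ (i : ℕ) = (j : ℕ) + 1 ∨
          ((i : ℕ) = N ∧ (j : ℕ) < N)) → nu i j = 0)
    (hG1' : ∀ k : Fin (N + 1), (∑ i : Fin (N + 1), nu i k) - ∑ j : Fin (N + 1), nu k j =
      if k = Fin.last N then 1 else if k = 0 then -1 else 0)
    (hpsd : ((1 / 2 : ℝ) • (Smat L μ τ H nu + (Smat L μ τ H nu)ᵀ)).PosSemidef) :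
    ∀ (y g : Fin (N + 1) → Vec d) (f : Fin (N + 1) → ℝ),
      GenBy L (antiT H) y g →
      (1 / (2 * τ) - 1 / (2 * L)) * ‖g (Fin.last N)‖ ^ 2 - f 0 + f (Fin.last N) ≤
        ∑ i : Fin (N + 1), ∑ j : Fin (N + 1), nu i j * Phi L μ y g f i j :=
  pep_semidefinite_sufficiency_general d N hN L μ hL hμL H τ nu hsp hG1' hpsd
end

section
/- For any reals ρ ∈ (−1, 0), η ∈ (0, ∞) and N ∈ (0, ∞), the function ψ : [0, N] → ℝ defined by ψ(t) = log((1 + (1−ρ)(N+t))/(1 + (1−ρ)(N−t))) if η = 1, and ψ(t) = log((−(η−ρ) + (1−ρ)η^{−t−N})/(−(η−ρ) + (1−ρ)η^{t−N})) if η ≠ 1, is convex on the interval [0, N]. -/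
open Set Real

lemma convexOn_congrOn {s : Set ℝ} {f g : ℝ → ℝ} (h : ConvexOn ℝ s f)
    (he : Set.EqOn f g s) : ConvexOn ℝ s g :=
  ⟨h.1, fun x hx y hy a b ha hb hab => by
    rw [← he hx, ← he hy, ← he (h.1 hx hy ha hb hab)]
    exact h.2 hx hy ha hb hab⟩

lemma case_one (a N : ℝ) (ha : 0 < a) (hN : 0 < N) :
    ConvexOn ℝ (Set.Icc 0 N)
      (fun t => Real.log ((1 + a * (N + t)) / (1 + a * (N - t)))) := by
  refine convexOn_congrOn (g := fun t => Real.log ((1 + a * (N + t)) / (1 + a * (N - t))))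
    (f := fun t => Real.log (1 + a * (N + t)) - Real.log (1 + a * (N - t))) ?_ ?_
  swap
  · intro t ht
    have h1 : 0 < 1 + a * (N + t) := by nlinarith [ht.1, ht.2]
    have h2 : 0 < 1 + a * (N - t) := by nlinarith [ht.1, ht.2]
    exact (Real.log_div h1.ne' h2.ne').symm
  set U : Set ℝ := Set.Ioo (-N) (N + a⁻¹) with hU
  have hUopen : IsOpen U := isOpen_Ioo
  have hsub : Set.Icc (0:ℝ) N ⊆ U := by
    intro t ht
    constructor
    · linarith [ht.1]
    · have : 0 < a⁻¹ := inv_pos.mpr ha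
      linarith [ht.2]
  have hp : ∀ t ∈ U, 0 < 1 + a * (N + t) := by
    intro t ht
    have : 0 < N + t := by linarith [ht.1]
    nlinarith
  have hq : ∀ t ∈ U, 0 < 1 + a * (N - t) := by
    intro t ht
    have h1 : N - t > -a⁻¹ := by linarith [ht.2]
    have := mul_pos ha (show (0:ℝ) < a⁻¹ + (N - t) by linarith)
    rw [mul_add, mul_inv_cancel₀ (ne_of_gt ha)] at this
    linarith
  set F' : ℝ → ℝ := fun t => a / (1 + a * (N + t)) - -a / (1 + a * (N - t)) with hF'
  have hder : ∀ t ∈ U, HasDerivAt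
      (fun t => Real.log (1 + a * (N + t)) - Real.log (1 + a * (N - t))) (F' t) t := by
    intro t ht
    have h1 : HasDerivAt (fun t : ℝ => 1 + a * (N + t)) a t := by
      simpa using (((hasDerivAt_id t).const_add N).const_mul a).const_add 1
    have h2 : HasDerivAt (fun t : ℝ => 1 + a * (N - t)) (-a) t := by
      simpa using (((hasDerivAt_id t).const_sub N).const_mul a).const_add 1
    exact (h1.log (hp t ht).ne').sub (h2.log (hq t ht).ne')
  have hderiv_eq : Set.EqOn
      (deriv (fun t => Real.log (1 + a * (N + t)) - Real.log (1 + a * (N - t)))) F' U :=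
    fun t ht => (hder t ht).deriv
  have hder2 : ∀ t ∈ U, HasDerivAt F'
      ((0 * (1 + a * (N + t)) - a * a) / (1 + a * (N + t)) ^ 2 -
        (0 * (1 + a * (N - t)) - -a * -a) / (1 + a * (N - t)) ^ 2) t := by
    intro t ht
    have h1 : HasDerivAt (fun t : ℝ => 1 + a * (N + t)) a t := by
      simpa using (((hasDerivAt_id t).const_add N).const_mul a).const_add 1
    have h2 : HasDerivAt (fun t : ℝ => 1 + a * (N - t)) (-a) t := by
      simpa using (((hasDerivAt_id t).const_sub N).const_mul a).const_add 1
    exact ((hasDerivAt_const t a).div h1 (hp t ht).ne').sub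
      ((hasDerivAt_const t (-a)).div h2 (hq t ht).ne')
  apply convexOn_of_deriv2_nonneg (convex_Icc 0 N)
  · exact fun t ht => (hder t (hsub ht)).continuousAt.continuousWithinAt
  · intro t ht
    exact (hder t (hsub (interior_subset ht))).differentiableAt.differentiableWithinAt
  · intro t ht
    have htU : t ∈ U := hsub (interior_subset ht)
    have hev : deriv (fun t => Real.log (1 + a * (N + t)) - Real.log (1 + a * (N - t)))
        =ᶠ[nhds t] F' := Filter.eventuallyEq_of_mem (hUopen.mem_nhds htU) hderiv_eq
    exact (hev.differentiableAt_iff.mpr (hder2 t htU).differentiableAt).differentiableWithinAt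
  · intro t ht
    rw [interior_Icc] at ht
    have htU : t ∈ U := hsub (Ioo_subset_Icc_self ht)
    have hev : deriv (fun t => Real.log (1 + a * (N + t)) - Real.log (1 + a * (N - t)))
        =ᶠ[nhds t] F' := Filter.eventuallyEq_of_mem (hUopen.mem_nhds htU) hderiv_eq
    have : deriv^[2] (fun t => Real.log (1 + a * (N + t)) - Real.log (1 + a * (N - t))) t
        = (0 * (1 + a * (N + t)) - a * a) / (1 + a * (N + t)) ^ 2 -
          (0 * (1 + a * (N - t)) - -a * -a) / (1 + a * (N - t)) ^ 2 := by
      rw [Function.iterate_succ, Function.iterate_one, Function.comp_apply]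
      rw [hev.deriv_eq]
      exact (hder2 t htU).deriv
    rw [this]
    have hpt := hp t htU
    have hqt := hq t htU
    have hle : 1 + a * (N - t) ≤ 1 + a * (N + t) := by nlinarith [ht.1]
    have h1 : a * a / (1 + a * (N + t)) ^ 2 ≤ a * a / (1 + a * (N - t)) ^ 2 := by
      gcongr
    have key : (0 * (1 + a * (N + t)) - a * a) / (1 + a * (N + t)) ^ 2 -
        (0 * (1 + a * (N - t)) - -a * -a) / (1 + a * (N - t)) ^ 2
        = a * a / (1 + a * (N - t)) ^ 2 - a * a / (1 + a * (N + t)) ^ 2 := by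
      ring
    rw [key]
    linarith

lemma case_ne (b c L N : ℝ) (hb : 0 < b) (hc : c < 0) (hcb : L * (c + b) < 0) (hN : 0 < N) :
    ConvexOn ℝ (Set.Icc 0 N)
      (fun t => Real.log ((c + b * Real.exp (L * (-t - N))) /
                (c + b * Real.exp (L * (t - N))))) := by
  -- sign facts
  have hsgn : (L < 0 ∧ ∀ s : ℝ, s ≤ 0 → 0 < c + b * Real.exp (L * s)) ∨
      (0 < L ∧ ∀ s : ℝ, s ≤ 0 → c + b * Real.exp (L * s) < 0) := by
    rcases lt_trichotomy L 0 with hL | hL | hL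
    · left
      refine ⟨hL, fun s hs => ?_⟩
      have hcb' : 0 < c + b := by
        rcases (mul_neg_iff.mp hcb) with ⟨h1, h2⟩ | ⟨h1, h2⟩
        · exact absurd h1 (not_lt.mpr hL.le)
        · linarith
      have h1 : (1 : ℝ) ≤ Real.exp (L * s) := by
        rw [← Real.exp_zero]
        exact Real.exp_le_exp.mpr (by nlinarith)
      nlinarith
    · exfalso; rw [hL] at hcb; simp at hcb
    · right
      refine ⟨hL, fun s hs => ?_⟩
      have hcb' : c + b < 0 := by
        rcases (mul_neg_iff.mp hcb) with ⟨h1, h2⟩ | ⟨h1, h2⟩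
        · linarith
        · exact absurd h1 (not_lt.mpr hL.le)
      have h1 : Real.exp (L * s) ≤ 1 := by
        rw [← Real.exp_zero]
        exact Real.exp_le_exp.mpr (mul_nonpos_of_nonneg_of_nonpos hL.le hs)
      nlinarith
  have hne : ∀ s : ℝ, s ≤ 0 → c + b * Real.exp (L * s) ≠ 0 := by
    intro s hs
    rcases hsgn with ⟨_, h⟩ | ⟨_, h⟩
    · exact (h s hs).ne'
    · exact (h s hs).ne
  refine convexOn_congrOn
    (f := fun t => Real.log (c + b * Real.exp (L * (-t - N))) -
                Real.log (c + b * Real.exp (L * (t - N)))) ?_ ?_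
  swap
  · intro t ht
    exact (Real.log_div (hne _ (by linarith [ht.1, ht.2, hN])) (hne _ (by linarith [ht.2]))).symm
  set U : Set ℝ := Set.Ioo (-N) N with hU
  have hUopen : IsOpen U := isOpen_Ioo
  have hsub : Set.Ioo (0:ℝ) N ⊆ U := fun t ht => ⟨by linarith [ht.1], ht.2⟩
  have hne1 : ∀ t ∈ U, c + b * Real.exp (L * (-t - N)) ≠ 0 :=
    fun t ht => hne _ (by linarith [ht.1])
  have hne2 : ∀ t ∈ U, c + b * Real.exp (L * (t - N)) ≠ 0 :=
    fun t ht => hne _ (by linarith [ht.2])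
  -- derivative data
  have hnum : ∀ t : ℝ, HasDerivAt (fun t => c + b * Real.exp (L * (-t - N)))
      (b * (Real.exp (L * (-t - N)) * (L * -1))) t := by
    intro t
    have h0 : HasDerivAt (fun t : ℝ => L * (-t - N)) (L * -1) t :=
      ((hasDerivAt_id t).neg.sub_const N).const_mul L
    exact ((h0.exp).const_mul b).const_add c
  have hden : ∀ t : ℝ, HasDerivAt (fun t => c + b * Real.exp (L * (t - N)))
      (b * (Real.exp (L * (t - N)) * (L * 1))) t := by
    intro t
    have h0 : HasDerivAt (fun t : ℝ => L * (t - N)) (L * 1) t :=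
      ((hasDerivAt_id t).sub_const N).const_mul L
    exact ((h0.exp).const_mul b).const_add c
  set F' : ℝ → ℝ := fun t =>
      b * (Real.exp (L * (-t - N)) * (L * -1)) / (c + b * Real.exp (L * (-t - N))) -
      b * (Real.exp (L * (t - N)) * (L * 1)) / (c + b * Real.exp (L * (t - N))) with hF'
  have hder : ∀ t ∈ U, HasDerivAt
      (fun t => Real.log (c + b * Real.exp (L * (-t - N))) -
                Real.log (c + b * Real.exp (L * (t - N)))) (F' t) t := by
    intro t ht
    exact ((hnum t).log (hne1 t ht)).sub ((hden t).log (hne2 t ht))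
  have hderiv_eq : Set.EqOn (deriv
      (fun t => Real.log (c + b * Real.exp (L * (-t - N))) -
                Real.log (c + b * Real.exp (L * (t - N))))) F' U :=
    fun t ht => (hder t ht).deriv
  -- second derivative
  have hD1 : ∀ t : ℝ, HasDerivAt (fun t => b * (Real.exp (L * (-t - N)) * (L * -1)))
      (b * (Real.exp (L * (-t - N)) * (L * -1) * (L * -1))) t := by
    intro t
    have h0 : HasDerivAt (fun t : ℝ => L * (-t - N)) (L * -1) t :=
      ((hasDerivAt_id t).neg.sub_const N).const_mul L
    exact ((h0.exp).mul_const (L * -1)).const_mul b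
  have hD2 : ∀ t : ℝ, HasDerivAt (fun t => b * (Real.exp (L * (t - N)) * (L * 1)))
      (b * (Real.exp (L * (t - N)) * (L * 1) * (L * 1))) t := by
    intro t
    have h0 : HasDerivAt (fun t : ℝ => L * (t - N)) (L * 1) t :=
      ((hasDerivAt_id t).sub_const N).const_mul L
    exact ((h0.exp).mul_const (L * 1)).const_mul b
  set G : ℝ → ℝ := fun t =>
      (b * (Real.exp (L * (-t - N)) * (L * -1) * (L * -1)) * (c + b * Real.exp (L * (-t - N))) -
        b * (Real.exp (L * (-t - N)) * (L * -1)) * (b * (Real.exp (L * (-t - N)) * (L * -1)))) /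
        (c + b * Real.exp (L * (-t - N))) ^ 2 -
      (b * (Real.exp (L * (t - N)) * (L * 1) * (L * 1)) * (c + b * Real.exp (L * (t - N))) -
        b * (Real.exp (L * (t - N)) * (L * 1)) * (b * (Real.exp (L * (t - N)) * (L * 1)))) /
        (c + b * Real.exp (L * (t - N))) ^ 2 with hG
  have hder2 : ∀ t ∈ U, HasDerivAt F' (G t) t := by
    intro t ht
    exact (((hD1 t).div (hnum t) (hne1 t ht)).sub ((hD2 t).div (hden t) (hne2 t ht)))
  -- the convexity
  apply convexOn_of_deriv2_nonneg (convex_Icc 0 N)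
  · apply ContinuousOn.sub
    · apply ContinuousOn.log
      · fun_prop
      · intro t ht; exact hne _ (by simp at ht; linarith [ht.1, ht.2])
    · apply ContinuousOn.log
      · fun_prop
      · intro t ht; exact hne _ (by simp at ht; linarith [ht.2])
  · intro t ht
    rw [interior_Icc] at ht
    exact (hder t (hsub ht)).differentiableAt.differentiableWithinAt
  · intro t ht
    rw [interior_Icc] at ht
    have htU : t ∈ U := hsub ht
    have hev : (deriv (fun t => Real.log (c + b * Real.exp (L * (-t - N))) -
        Real.log (c + b * Real.exp (L * (t - N))))) =ᶠ[nhds t] F' :=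
      Filter.eventuallyEq_of_mem (hUopen.mem_nhds htU) hderiv_eq
    exact (hev.differentiableAt_iff.mpr (hder2 t htU).differentiableAt).differentiableWithinAt
  · intro t ht
    rw [interior_Icc] at ht
    have htU : t ∈ U := hsub ht
    have hev : (deriv (fun t => Real.log (c + b * Real.exp (L * (-t - N))) -
        Real.log (c + b * Real.exp (L * (t - N))))) =ᶠ[nhds t] F' :=
      Filter.eventuallyEq_of_mem (hUopen.mem_nhds htU) hderiv_eq
    have h2 : deriv^[2] (fun t => Real.log (c + b * Real.exp (L * (-t - N))) -
        Real.log (c + b * Real.exp (L * (t - N)))) t = G t := by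
      rw [Function.iterate_succ, Function.iterate_one, Function.comp_apply]
      rw [hev.deriv_eq]
      exact (hder2 t htU).deriv
    rw [h2]
    -- now the sign computation
    have hA : 0 < b * Real.exp (L * (-t - N)) := by positivity
    have hB : 0 < b * Real.exp (L * (t - N)) := by positivity
    have key : G t = L ^ 2 * (c * ((b * Real.exp (L * (-t - N)) - b * Real.exp (L * (t - N))) *
        (c ^ 2 - (b * Real.exp (L * (-t - N))) * (b * Real.exp (L * (t - N)))))) /
        ((c + b * Real.exp (L * (-t - N))) ^ 2 * (c + b * Real.exp (L * (t - N))) ^ 2) := by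
      have A2 : ((c + b * Real.exp (L * (-t - N))) ^ 2) ≠ 0 := pow_ne_zero 2 (hne1 t htU)
      have B2 : ((c + b * Real.exp (L * (t - N))) ^ 2) ≠ 0 := pow_ne_zero 2 (hne2 t htU)
      simp only [hG]
      rw [div_sub_div _ _ A2 B2, div_eq_div_iff (mul_ne_zero A2 B2) (mul_ne_zero A2 B2)]
      ring
    rw [key]
    apply div_nonneg _ (by positivity)
    apply mul_nonneg (by positivity)
    rcases hsgn with ⟨hL, hpos⟩ | ⟨hL, hneg⟩
    · -- L < 0 : A ≥ B, c+A > 0, c+B > 0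
      have hBA : b * Real.exp (L * (t - N)) ≤ b * Real.exp (L * (-t - N)) := by
        apply mul_le_mul_of_nonneg_left _ hb.le
        apply Real.exp_le_exp.mpr
        nlinarith [ht.1]
      have hcB : 0 < c + b * Real.exp (L * (t - N)) := hpos _ (by linarith [ht.2])
      have hcA : 0 < c + b * Real.exp (L * (-t - N)) := hpos _ (by linarith [ht.1])
      nlinarith [mul_nonneg (sub_nonneg.mpr hBA)
        (sub_nonneg.mpr (show c ^ 2 ≤ (b * Real.exp (L * (-t - N))) * (b * Real.exp (L * (t - N))) by nlinarith))]
    · -- L > 0 : A ≤ B, c+A < 0, c+B < 0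
      have hAB : b * Real.exp (L * (-t - N)) ≤ b * Real.exp (L * (t - N)) := by
        apply mul_le_mul_of_nonneg_left _ hb.le
        apply Real.exp_le_exp.mpr
        nlinarith [ht.1]
      have hcB : c + b * Real.exp (L * (t - N)) < 0 := hneg _ (by linarith [ht.2])
      have hcA : c + b * Real.exp (L * (-t - N)) < 0 := hneg _ (by linarith [ht.1])
      nlinarith [mul_nonneg (sub_nonneg.mpr hAB)
        (sub_nonneg.mpr (show (b * Real.exp (L * (-t - N))) * (b * Real.exp (L * (t - N))) ≤ c ^ 2 by nlinarith))]

/-- For `ρ ∈ (−1, 0)`, `η ∈ (0, ∞)` and `N ∈ (0, ∞)`, the function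
`ψ(t) = log((1 + (1−ρ)(N+t))/(1 + (1−ρ)(N−t)))` if `η = 1`, and
`ψ(t) = log((−(η−ρ) + (1−ρ)η^{−t−N})/(−(η−ρ) + (1−ρ)η^{t−N}))` otherwise,
is convex on `[0, N]`. -/
theorem psi_convex (ρ η N : ℝ) (hρ : ρ ∈ Set.Ioo (-1 : ℝ) 0) (hη : 0 < η) (hN : 0 < N) :
    ConvexOn ℝ (Set.Icc (0 : ℝ) N) (fun t : ℝ =>
      if η = 1 then
        Real.log ((1 + (1 - ρ) * (N + t)) / (1 + (1 - ρ) * (N - t)))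
      else
        Real.log ((-(η - ρ) + (1 - ρ) * η ^ (-t - N)) /
          (-(η - ρ) + (1 - ρ) * η ^ (t - N)))) := by
  obtain ⟨hρ1, hρ2⟩ := hρ
  by_cases h1 : η = 1
  · simp only [if_pos h1]
    exact case_one (1 - ρ) N (by linarith) hN
  · simp only [if_neg h1]
    have hb : 0 < 1 - ρ := by linarith
    have hc : -(η - ρ) < 0 := by linarith
    have hcb : Real.log η * (-(η - ρ) + (1 - ρ)) < 0 := by
      have he : -(η - ρ) + (1 - ρ) = 1 - η := by ring
      rw [he]
      rcases lt_or_gt_of_ne h1 with h | h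
      · exact mul_neg_of_neg_of_pos (Real.log_neg hη h) (by linarith)
      · exact mul_neg_of_pos_of_neg (Real.log_pos h) (by linarith)
    have heq : (fun t : ℝ => Real.log ((-(η - ρ) + (1 - ρ) * η ^ (-t - N)) /
          (-(η - ρ) + (1 - ρ) * η ^ (t - N))))
        = fun t : ℝ => Real.log ((-(η - ρ) + (1 - ρ) * Real.exp (Real.log η * (-t - N))) /
          (-(η - ρ) + (1 - ρ) * Real.exp (Real.log η * (t - N)))) := by
      funext t
      rw [Real.rpow_def_of_pos hη, Real.rpow_def_of_pos hη]
    rw [heq]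
    exact case_ne (1 - ρ) (-(η - ρ)) (Real.log η) N hb hc hcb hN
end

section
/- Let N ≥ 3 be an integer and let ρ ∈ (−1, 0) and η ∈ (−ρ, ∞) be reals. Assume T_k(ρ,η) ≥ 0 for k = 1,…,N−1 and T_N(ρ,η) = 0. Then for every k = 1,…,N−2: T_{k+1}(ρ,η)/F_{N−k−1}(η) − T_k(ρ,η)/F_{N−k}(η) ≥ 0. -/
open Finset

/-- `E_k(x) = ∑_{j=1}^{2k} x^{−j}`. -/
noncomputable def Efun (k : ℕ) (x : ℝ) : ℝ := ∑ j ∈ Finset.Icc 1 (2 * k), x ^ (-(j : ℤ))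

/-- `F_k(x) = ∑_{j=1}^{k} x^{j}`. -/
noncomputable def Ffun (k : ℕ) (x : ℝ) : ℝ := ∑ j ∈ Finset.Icc 1 k, x ^ j

/-- `T_k(ρ, η) = E_k(η) − E_k(ρ)`. -/
noncomputable def Tfun (k : ℕ) (ρ η : ℝ) : ℝ := Efun k η - Efun k ρ

noncomputable def Pfun (i : ℕ) (ρ η : ℝ) : ℝ :=
  (1 + η) * ((η ^ 2)⁻¹) ^ i - (1 + ρ) * ((ρ ^ 2)⁻¹) ^ i

lemma Efun_succ (k : ℕ) (x : ℝ) (hx : x ≠ 0) :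
    Efun (k + 1) x = Efun k x + (1 + x) * ((x ^ 2)⁻¹) ^ (k + 1) := by
  unfold Efun
  have h2 : 2 * (k + 1) = (2 * k + 1) + 1 := by ring
  rw [h2, Finset.sum_Icc_succ_top (by omega), Finset.sum_Icc_succ_top (by omega)]
  have e1 : (x : ℝ) ^ (-((2 * k + 1 : ℕ) : ℤ)) = (x ^ (2 * k + 1))⁻¹ := by
    rw [zpow_neg, zpow_natCast]
  have e2 : (x : ℝ) ^ (-(((2 * k + 1) + 1 : ℕ) : ℤ)) = (x ^ (2 * k + 2))⁻¹ := by
    rw [zpow_neg, zpow_natCast]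
  rw [e1, e2]
  have e3 : ((x ^ 2)⁻¹) ^ (k + 1) = (x ^ (2 * k + 2))⁻¹ := by
    rw [← inv_pow, ← pow_mul]
    ring_nf
  rw [e3]
  have hx1 : x ^ (2 * k + 1) ≠ 0 := pow_ne_zero _ hx
  have hx2 : x ^ (2 * k + 2) ≠ 0 := pow_ne_zero _ hx
  field_simp
  ring

lemma Tfun_succ (k : ℕ) (ρ η : ℝ) (hρ : ρ ≠ 0) (hη : η ≠ 0) :
    Tfun (k + 1) ρ η = Tfun k ρ η + Pfun (k + 1) ρ η := by
  unfold Tfun Pfun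
  rw [Efun_succ k η hη, Efun_succ k ρ hρ]
  ring

lemma Tfun_add (n k : ℕ) (ρ η : ℝ) (hρ : ρ ≠ 0) (hη : η ≠ 0) :
    Tfun (k + n) ρ η = Tfun k ρ η + ∑ i ∈ Finset.range n, Pfun (k + 1 + i) ρ η := by
  induction n with
  | zero => simp
  | succ n ih =>
      have : k + (n + 1) = (k + n) + 1 := by omega
      rw [this, Tfun_succ (k + n) ρ η hρ hη, ih, Finset.sum_range_succ]
      have : k + 1 + n = k + n + 1 := by omega
      rw [this]
      ring

/-- For `N ≥ 3`, `ρ ∈ (−1, 0)`, `η ∈ (−ρ, ∞)` with `T_k(ρ,η) ≥ 0` for `k = 1, …, N−1`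
and `T_N(ρ,η) = 0`, one has `T_{k+1}(ρ,η)/F_{N−k−1}(η) − T_k(ρ,η)/F_{N−k}(η) ≥ 0`
for `k = 1, …, N−2`. -/
theorem T_ratio_increasing (N : ℕ) (hN : 3 ≤ N) (ρ η : ℝ)
    (hρ : ρ ∈ Set.Ioo (-1 : ℝ) 0) (hη : -ρ < η)
    (hT : ∀ k : ℕ, 1 ≤ k → k ≤ N - 1 → 0 ≤ Tfun k ρ η)
    (hTN : Tfun N ρ η = 0) :
    ∀ k : ℕ, 1 ≤ k → k ≤ N - 2 →
      0 ≤ Tfun (k + 1) ρ η / Ffun (N - k - 1) η - Tfun k ρ η / Ffun (N - k) η := by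
  obtain ⟨hρ1, hρ0⟩ := hρ
  have hη0 : 0 < η := lt_trans (by linarith) hη
  have hρne : ρ ≠ 0 := ne_of_lt hρ0
  have hηne : η ≠ 0 := ne_of_gt hη0
  have hρ2 : (0:ℝ) < ρ ^ 2 := by positivity
  have hη2 : (0:ℝ) < η ^ 2 := by positivity
  have hsq : ρ ^ 2 < η ^ 2 := by nlinarith
  have hηρ2 : ρ ^ 2 < η := by nlinarith
  -- step lemma
  have step : ∀ i : ℕ, Pfun i ρ η ≤ 0 →
      η * Pfun (i + 1) ρ η ≤ Pfun i ρ η ∧ Pfun (i + 1) ρ η ≤ 0 := by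
    intro i hi
    have ha : (0:ℝ) < ((η ^ 2)⁻¹) ^ i := by positivity
    have hb : (0:ℝ) < ((ρ ^ 2)⁻¹) ^ i := by positivity
    have hA : (0:ℝ) ≤ (1 + η) * ((η ^ 2)⁻¹) ^ i := by
      apply mul_nonneg (by linarith) ha.le
    have hAB : (1 + η) * ((η ^ 2)⁻¹) ^ i ≤ (1 + ρ) * ((ρ ^ 2)⁻¹) ^ i := by
      unfold Pfun at hi; linarith
    have ht : (1:ℝ) < η * (ρ ^ 2)⁻¹ := by
      rw [lt_mul_inv_iff₀ hρ2]; linarith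
    have hts : η * (η ^ 2)⁻¹ ≤ η * (ρ ^ 2)⁻¹ := by
      apply mul_le_mul_of_nonneg_left _ hη0.le
      exact inv_anti₀ hρ2 hsq.le
    have key : η * Pfun (i + 1) ρ η ≤ Pfun i ρ η := by
      have hP1 : Pfun (i + 1) ρ η
          = (1 + η) * (η ^ 2)⁻¹ * ((η ^ 2)⁻¹) ^ i - (1 + ρ) * (ρ ^ 2)⁻¹ * ((ρ ^ 2)⁻¹) ^ i := by
        unfold Pfun; ring
      have hPi : Pfun i ρ η = (1 + η) * ((η ^ 2)⁻¹) ^ i - (1 + ρ) * ((ρ ^ 2)⁻¹) ^ i := rfl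
      rw [hP1, hPi]
      set a : ℝ := ((η ^ 2)⁻¹) ^ i
      set b : ℝ := ((ρ ^ 2)⁻¹) ^ i
      nlinarith [mul_nonneg (sub_nonneg.mpr hAB) (by linarith : (0:ℝ) ≤ η * (ρ ^ 2)⁻¹ - 1),
        mul_nonneg hA (by linarith : (0:ℝ) ≤ η * (ρ ^ 2)⁻¹ - η * (η ^ 2)⁻¹)]
    refine ⟨key, ?_⟩
    have : η * Pfun (i + 1) ρ η ≤ η * 0 := by rw [mul_zero]; linarith
    exact le_of_mul_le_mul_left this hη0
  -- chain lemma
  have chain : ∀ k : ℕ, Pfun (k + 1) ρ η ≤ 0 → ∀ m : ℕ,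
      Pfun (k + 1 + m) ρ η ≤ 0 ∧ -Pfun (k + 1) ρ η ≤ η ^ m * (-Pfun (k + 1 + m) ρ η) := by
    intro k hk m
    induction m with
    | zero => simpa using hk
    | succ m ih =>
        obtain ⟨h1, h2⟩ := ih
        obtain ⟨s1, s2⟩ := step (k + 1 + m) h1
        have hm : k + 1 + (m + 1) = (k + 1 + m) + 1 := by omega
        rw [hm]
        refine ⟨s2, ?_⟩
        have hηm : (0:ℝ) ≤ η ^ m := by positivity
        have : η ^ m * (-Pfun (k + 1 + m) ρ η) ≤ η ^ m * (η * (-Pfun (k + 1 + m + 1) ρ η)) := by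
          apply mul_le_mul_of_nonneg_left _ hηm
          linarith
        calc -Pfun (k + 1) ρ η ≤ η ^ m * (-Pfun (k + 1 + m) ρ η) := h2
          _ ≤ η ^ m * (η * (-Pfun (k + 1 + m + 1) ρ η)) := this
          _ = η ^ (m + 1) * (-Pfun (k + 1 + m + 1) ρ η) := by ring
  intro k hk1 hk2
  have hkN : k ≤ N - 2 := hk2
  set n : ℕ := N - k with hn
  have hn2 : 2 ≤ n := by omega
  have hkn : k + n = N := by omega
  have hFpos : ∀ m : ℕ, 1 ≤ m → 0 < Ffun m η := by
    intro m hm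
    unfold Ffun
    apply Finset.sum_pos
    · intro j hj; positivity
    · exact ⟨1, by simp [Finset.mem_Icc]; omega⟩
  have hF : 0 < Ffun n η := hFpos n (by omega)
  have hF' : 0 < Ffun (n - 1) η := hFpos (n - 1) (by omega)
  have hFsplit : Ffun n η = Ffun (n - 1) η + η ^ n := by
    unfold Ffun
    have : n = (n - 1) + 1 := by omega
    rw [this, Finset.sum_Icc_succ_top (by omega)]
    rw [← this]
  have hT1 : Tfun (k + 1) ρ η = Tfun k ρ η + Pfun (k + 1) ρ η :=
    Tfun_succ k ρ η hρne hηne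
  -- key inequality
  have key : 0 ≤ Tfun k ρ η * η ^ n + Pfun (k + 1) ρ η * Ffun n η := by
    rcases le_or_gt 0 (Pfun (k + 1) ρ η) with hP | hP
    · have hTk : 0 ≤ Tfun k ρ η := hT k hk1 (by omega)
      have : (0:ℝ) ≤ η ^ n := by positivity
      nlinarith
    · -- hard case
      have hTksum : Tfun k ρ η = ∑ i ∈ Finset.range n, (-Pfun (k + 1 + i) ρ η) := by
        have := Tfun_add n k ρ η hρne hηne
        rw [hkn, hTN] at this
        rw [Finset.sum_neg_distrib]
        linarith
      have hFeq : Ffun n η = ∑ i ∈ Finset.range n, η ^ (1 + i) := by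
        unfold Ffun
        rw [← Finset.Ico_add_one_right_eq_Icc, Finset.sum_Ico_eq_sum_range]
        simp
      have hreflect : ∑ i ∈ Finset.range n, (-Pfun (k + 1) ρ η) * η ^ (1 + i)
          = ∑ i ∈ Finset.range n, (-Pfun (k + 1) ρ η) * η ^ (1 + (n - 1 - i)) := by
        rw [Finset.sum_range_reflect (fun i => (-Pfun (k + 1) ρ η) * η ^ (1 + i)) n]
      have hterm : ∀ i ∈ Finset.range n,
          (-Pfun (k + 1) ρ η) * η ^ (1 + (n - 1 - i)) ≤ (-Pfun (k + 1 + i) ρ η) * η ^ n := by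
        intro i hi
        rw [Finset.mem_range] at hi
        obtain ⟨_, hc⟩ := chain k hP.le i
        have hpow : η ^ n = η ^ (1 + (n - 1 - i)) * η ^ i := by
          rw [← pow_add]
          congr 1
          omega
        have hηpos : (0:ℝ) < η ^ (1 + (n - 1 - i)) := by positivity
        calc (-Pfun (k + 1) ρ η) * η ^ (1 + (n - 1 - i))
            ≤ (η ^ i * (-Pfun (k + 1 + i) ρ η)) * η ^ (1 + (n - 1 - i)) := by
              apply mul_le_mul_of_nonneg_right hc hηpos.le
          _ = (-Pfun (k + 1 + i) ρ η) * η ^ n := by rw [hpow]; ring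
      have hsum : ∑ i ∈ Finset.range n, (-Pfun (k + 1) ρ η) * η ^ (1 + (n - 1 - i))
          ≤ ∑ i ∈ Finset.range n, (-Pfun (k + 1 + i) ρ η) * η ^ n :=
        Finset.sum_le_sum hterm
      rw [← hreflect] at hsum
      have lhs_eq : ∑ i ∈ Finset.range n, (-Pfun (k + 1) ρ η) * η ^ (1 + i)
          = (-Pfun (k + 1) ρ η) * Ffun n η := by
        rw [hFeq, Finset.mul_sum]
      have rhs_eq : ∑ i ∈ Finset.range n, (-Pfun (k + 1 + i) ρ η) * η ^ n
          = Tfun k ρ η * η ^ n := by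
        rw [hTksum, Finset.sum_mul]
      rw [lhs_eq, rhs_eq] at hsum
      nlinarith
  have hNk1 : N - k - 1 = n - 1 := by omega
  have hNk : N - k = n := rfl
  rw [hNk1, sub_nonneg, div_le_div_iff₀ hF hF']
  rw [hFsplit] at key
  rw [hT1, hFsplit]
  nlinarith [key]
end
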